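/- arXiv:1004.3635 — 3 statements merged into one kernel-verified Lean document; each statement's English description precedes it below -/
import Mathlib

section
/- The family of languages generated by nonerasing semi-conditional grammars of degree (1,1) equals the family of random context languages: SC(1,1) = RC. -/
/-- Symbols: nonterminals `N` plus terminals `T`. -/
abbrev Symb (N T : Type) := N ⊕ T

/-- `alph w` is the set of symbols occurring in the string `w`. -/
def alph {α : Type} (w : List α) : Set α := {a | a ∈ w}

/-- A (nonerasing) random context grammar: finitely many productions
`(A → x, Per, For)` with `A ∈ N`, `x ∈ (N ∪ T)⁺`, `Per, For ⊆ N`. -/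
structure RCG (N T : Type) where
  rules : Set (N × List (Symb N T) × Set N × Set N)
  fin : rules.Finite
  ne : ∀ r ∈ rules, r.2.1 ≠ []
  start : N

/-- One derivation step of a random context grammar.  The flag `incl` tells whether
the rewritten symbol is included in the context check (`true`: conditions checked
against `alph (uAv)`; `false`: against `alph (uv)`). -/
def RCG.Step {N T : Type} (G : RCG N T) (incl : Bool)
    (s₁ s₂ : List (Symb N T)) : Prop :=
  ∃ A x Per For u v, (A, x, Per, For) ∈ G.rules ∧
    s₁ = u ++ Sum.inl A :: v ∧ s₂ = u ++ x ++ v ∧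
    (∀ B ∈ Per, Sum.inl B ∈ alph (if incl then s₁ else u ++ v)) ∧
    (∀ B ∈ For, Sum.inl B ∉ alph (if incl then s₁ else u ++ v))

/-- The language of a random context grammar (under the chosen derivation definition). -/
def RCG.Lang {N T : Type} (G : RCG N T) (incl : Bool) : Set (List T) :=
  {w | Relation.ReflTransGen (G.Step incl) [Sum.inl G.start] (w.map Sum.inr)}

/-- The family of random context languages over terminal alphabet `T`
(standard definition: rewritten symbol excluded from the context check). -/
def RC (T : Type) : Set (Set (List T)) :=
  {L | ∃ (N : Type) (G : RCG N T), G.Lang false = L}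

/-- A (nonerasing) semi-conditional grammar of degree (1,1): productions
`(A → x, Per, For)` with `Per, For ⊆ N ∪ T` of cardinality at most one. -/
structure SCG (N T : Type) where
  rules : Set (N × List (Symb N T) × Set (Symb N T) × Set (Symb N T))
  fin : rules.Finite
  ne : ∀ r ∈ rules, r.2.1 ≠ []
  per1 : ∀ r ∈ rules, r.2.2.1.Subsingleton
  for1 : ∀ r ∈ rules, r.2.2.2.Subsingleton
  start : N

/-- One derivation step of a semi-conditional grammar; `incl` as in `RCG.Step`. -/
def SCG.Step {N T : Type} (G : SCG N T) (incl : Bool)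
    (s₁ s₂ : List (Symb N T)) : Prop :=
  ∃ A x Per For u v, (A, x, Per, For) ∈ G.rules ∧
    s₁ = u ++ Sum.inl A :: v ∧ s₂ = u ++ x ++ v ∧
    Per ⊆ alph (if incl then s₁ else u ++ v) ∧
    (∀ a ∈ For, a ∉ alph (if incl then s₁ else u ++ v))

/-- The language of a semi-conditional grammar. -/
def SCG.Lang {N T : Type} (G : SCG N T) (incl : Bool) : Set (List T) :=
  {w | Relation.ReflTransGen (G.Step incl) [Sum.inl G.start] (w.map Sum.inr)}

/-- The family SC(1,1): inclusive derivation definition (context `alph (uAv)`). -/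
def SC11 (T : Type) : Set (Set (List T)) :=
  {L | ∃ (N : Type) (G : SCG N T), G.Lang true = L}

/-- The family SC'(1,1): exclusive derivation definition (context `alph (uv)`). -/
def SC11' (T : Type) : Set (Set (List T)) :=
  {L | ∃ (N : Type) (G : SCG N T), G.Lang false = L}

/-!
SC(1,1) ⊆ RC: the random context grammar has every symbol of the semi-conditional grammar `G`
as a nonterminal, so that conditions on terminals become conditions on nonterminals. A rule
`(A → x, Per, For)` of `G` checks `uAv`; with `Per \ {A}` instead of `Per` the same test is made
on `uv`, and rules with `A ∈ For` never apply. Copies of terminals are released by rules that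
forbid every nonterminal of `G`, so a form containing a real terminal is, up to the remaining
copies, a word generated by `G`.

RC ⊆ SC(1,1): a lock carried by the first symbol of the form serialises the simulation of a
rule `ρ = (A → x, Per, For)`. The lock selects `ρ`, one occurrence of `A` is marked (a second mark
is forbidden), then the lock tests the elements of `Per` and `For` one at a time, each test being
a production with one permitting or one forbidding symbol; since the marked occurrence is no
longer a plain `A`, these tests see exactly `uv`. Finally the mark is rewritten by `x` and the
lock is released, which is forbidden while the mark is present. When `ρ` rewrites the carried
symbol itself, the lock plays the role of the mark.
-/

open Relation

@[simp] theorem mem_alph {α : Type} {w : List α} {a : α} : a ∈ alph w ↔ a ∈ w := Iff.rfl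

def rhsSymbols {N α β : Type*} (R : Set (N × List α × β)) : Set α :=
  {c | ∃ r ∈ R, c ∈ r.2.1}

theorem rhsSymbols_finite {N α β : Type*} {R : Set (N × List α × β)} (hR : R.Finite) :
    (rhsSymbols R).Finite := by
  have h : rhsSymbols R = ⋃ r ∈ R, {c | c ∈ r.2.1} := by ext; simp [rhsSymbols]
  exact h ▸ hR.biUnion fun r _ => r.2.1.finite_toSet

theorem mem_of_reflTransGen_of_rewrite {α : Type*} {R : List α → List α → Prop} {S : Set α}
    (hR : ∀ s₁ s₂, R s₁ s₂ → ∃ u a v x, s₁ = u ++ a :: v ∧ s₂ = u ++ x ++ v ∧ ∀ c ∈ x, c ∈ S)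
    {s₀ s : List α} (h : ReflTransGen R s₀ s) {c : α} (hc : c ∈ s) : c ∈ s₀ ∨ c ∈ S := by
  induction h generalizing c with
  | refl => exact Or.inl hc
  | tail _ hstep ih =>
    obtain ⟨u, a, v, x, rfl, rfl, hx⟩ := hR _ _ hstep
    simp only [List.mem_append] at hc
    rcases hc with (hc | hc) | hc
    · exact ih (by simp [hc])
    · exact Or.inr (hx c hc)
    · exact ih (by simp [hc])

theorem Set.Finite.lists_length_le {α : Type*} {S : Set α} (hS : S.Finite) (L : ℕ) :
    {l : List α | l.length ≤ L ∧ ∀ c ∈ l, c ∈ S}.Finite := by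
  have := hS.to_subtype
  refine ((List.finite_length_le S L).image (List.map Subtype.val)).subset ?_
  rintro l ⟨hlen, hl⟩
  lift l to List S using hl
  exact ⟨l, by simpa using hlen, rfl⟩

theorem finite_productions_of_bounded {N α : Type*} {S : Set α} (hS : S.Finite)
    (f : N → α) (hf : Function.Injective f) (L : ℕ) {R : Set (N × List α × Set α × Set α)}
    (hR : ∀ r ∈ R, f r.1 ∈ S ∧ r.2.1.length ≤ L ∧ (∀ c ∈ r.2.1, c ∈ S) ∧ r.2.2.1 ⊆ S ∧
      r.2.2.2 ⊆ S) : R.Finite := by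
  refine ((hS.preimage hf.injOn).prod ((hS.lists_length_le L).prod
    (hS.finite_subsets.prod hS.finite_subsets))).subset ?_
  rintro ⟨A, x, P, F⟩ hr
  obtain ⟨h₁, h₂, h₃, h₄, h₅⟩ := hR _ hr
  exact ⟨h₁, ⟨h₂, h₃⟩, h₄, h₅⟩

theorem reflTransGen_of_forall_erase {α β : Type*} {R : β → β → Prop} (f : Set α → β)
    {P : Set α} (hP : P.Finite) (h : ∀ Q ⊆ P, ∀ b ∈ Q, R (f Q) (f (Q \ {b}))) :
    ReflTransGen R (f P) (f ∅) := by
  induction P, hP using Set.Finite.induction_on with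
  | empty => exact .refl
  | @insert b Q hb _ ih =>
    have hstep := h _ subset_rfl b (Set.mem_insert b Q)
    rw [Set.insert_sdiff_self_of_notMem hb] at hstep
    exact .head hstep (ih fun Q' hQ' => h Q' (hQ'.trans (Set.subset_insert b Q)))

/-! ### SC(1,1) ⊆ RC -/

namespace SCG

variable {N T : Type}

theorem mem_of_reflTransGen {G : SCG N T} {incl : Bool} {s₀ s : List (Symb N T)}
    (h : ReflTransGen (G.Step incl) s₀ s) {c : Symb N T} (hc : c ∈ s) :
    c ∈ s₀ ∨ c ∈ rhsSymbols G.rules :=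
  mem_of_reflTransGen_of_rewrite
    (fun _ _ ⟨_, x, _, _, u, v, hr, h₁, h₂, _⟩ => ⟨u, _, v, x, h₁, h₂, fun _ hc => ⟨_, hr, hc⟩⟩)
    h hc

def Applicable (G : SCG N T) (s : List (Symb N T)) (A : N) (x : List (Symb N T)) : Prop :=
  ∃ Per For, (A, x, Per, For) ∈ G.rules ∧ Per ⊆ alph s ∧ ∀ b ∈ For, b ∉ alph s

theorem step_true_cons {G : SCG N T} {a : Symb N T} {l s₂ : List (Symb N T)}
    (h : G.Step true (a :: l) s₂) :
    (∃ A x, a = Sum.inl A ∧ s₂ = x ++ l ∧ G.Applicable (a :: l) A x) ∨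
      ∃ u A v x, l = u ++ Sum.inl A :: v ∧ s₂ = a :: (u ++ x ++ v) ∧
        G.Applicable (a :: l) A x := by
  obtain ⟨A, x, Per, For, u, v, hr, h₁, rfl, hPer, hFor⟩ := h
  have happ : G.Applicable (a :: l) A x := ⟨Per, For, hr, hPer, hFor⟩
  rcases u with _ | ⟨b, u⟩
  · obtain ⟨rfl, rfl⟩ := List.cons_eq_cons.1 h₁
    exact Or.inl ⟨A, x, rfl, rfl, happ⟩
  · obtain ⟨rfl, rfl⟩ := List.cons_eq_cons.1 h₁
    exact Or.inr ⟨u, A, v, x, rfl, rfl, happ⟩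

variable (G : SCG N T)

def toRCG : RCG (Symb N T) T where
  rules :=
    (fun r => (Sum.inl r.1, r.2.1.map Sum.inl, r.2.2.1 \ {Sum.inl r.1}, r.2.2.2)) ''
        {r ∈ G.rules | Sum.inl r.1 ∉ r.2.2.2} ∪
      (fun a => (Sum.inr a, [Sum.inr a], ∅, Set.range Sum.inl)) ''
        (Sum.inr ⁻¹' rhsSymbols G.rules)
  fin := ((G.fin.subset (Set.sep_subset _ _)).image _).union
    (((rhsSymbols_finite G.fin).preimage Sum.inr_injective.injOn).image _)
  ne := by
    rintro _ (⟨r, hr, rfl⟩ | ⟨a, -, rfl⟩)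
    · simpa using G.ne r hr.1
    · simp
  start := Sum.inl G.start

def collapse : Symb (Symb N T) T → Symb N T := Sum.elim id Sum.inr

@[simp] theorem collapse_comp_inl : (collapse ∘ Sum.inl : Symb N T → Symb N T) = id := rfl

@[simp] theorem collapse_inr (a : T) : collapse (Sum.inr a : Symb (Symb N T) T) = Sum.inr a :=
  rfl

variable {G}

theorem toRCG_step_map_inl {s₁ s₂ : List (Symb N T)} (h : G.Step true s₁ s₂) :
    G.toRCG.Step false (s₁.map Sum.inl) (s₂.map Sum.inl) := by
  obtain ⟨A, x, Per, For, u, v, hr, rfl, rfl, hPer, hFor⟩ := h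
  have hA : Sum.inl A ∉ For := fun hA => hFor _ hA (by simp)
  refine ⟨Sum.inl A, x.map Sum.inl, Per \ {Sum.inl A}, For, u.map Sum.inl, v.map Sum.inl,
    Or.inl ⟨(A, x, Per, For), ⟨hr, hA⟩, rfl⟩, by simp, by simp, ?_, ?_⟩
  · rintro B ⟨hB, hBA⟩
    have := hPer hB
    simp_all
  · intro B hB
    have := hFor B hB
    simp_all

theorem toRCG_reflTransGen_terminals (u : List T) {v : List T}
    (hv : ∀ a ∈ v, Sum.inr a ∈ rhsSymbols G.rules) :
    ReflTransGen (G.toRCG.Step false) (u.map Sum.inr ++ v.map (Sum.inl ∘ Sum.inr))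
      ((u ++ v).map Sum.inr) := by
  induction v generalizing u with
  | nil => simp [ReflTransGen.refl]
  | cons a v ih =>
    refine .head ⟨Sum.inr a, [Sum.inr a], ∅, Set.range Sum.inl, u.map Sum.inr,
      v.map (Sum.inl ∘ Sum.inr), Or.inr ⟨a, hv a (by simp), rfl⟩, by simp, rfl, by simp,
      ?_⟩ (by simpa using ih (u ++ [a]) fun b hb => hv b (by simp [hb]))
    rintro _ ⟨B, rfl⟩
    simp

theorem toRCG_step_map_inl_cases {s : List (Symb N T)} {s₂ : List (Symb (Symb N T) T)}
    (h : G.toRCG.Step false (s.map Sum.inl) s₂) :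
    (∃ s', G.Step true s s' ∧ s₂ = s'.map Sum.inl) ∨
      ((∀ B, Sum.inl B ∉ s) ∧ s₂.map collapse = s) := by
  obtain ⟨A', x', Per', For', u, v, hr, h₁, rfl, hPer, hFor⟩ := h
  obtain ⟨u₀, _, rfl, rfl, A, v₀, rfl, rfl, rfl⟩ :
      ∃ u₀ w, s = u₀ ++ w ∧ u₀.map Sum.inl = u ∧
        ∃ A v₀, w = A :: v₀ ∧ A = A' ∧ v₀.map Sum.inl = v := by
    simpa only [List.map_eq_append_iff, List.map_eq_cons_iff, Sum.inl.injEq] using h₁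
  simp only [Bool.false_eq_true, ↓reduceIte, mem_alph] at hPer hFor
  rcases hr with ⟨⟨A, x, Per, For⟩, ⟨hr, hA⟩, heq⟩ | ⟨a, -, heq⟩
  · obtain ⟨rfl, rfl, rfl, rfl⟩ := Prod.mk.injEq _ _ _ _ ▸ heq
    refine Or.inl ⟨u₀ ++ x ++ v₀, ⟨A, x, Per, For, u₀, v₀, hr, rfl, rfl, ?_, ?_⟩, by simp⟩
    · intro B hB
      by_cases hBA : B = Sum.inl A
      · simp [hBA]
      · have := hPer B ⟨hB, hBA⟩
        simp_all
    · intro B hB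
      have := hFor B hB
      have : B ≠ Sum.inl A := by rintro rfl; exact hA hB
      simp_all
  · obtain ⟨rfl, rfl, rfl, rfl⟩ := Prod.mk.injEq _ _ _ _ ▸ heq
    refine Or.inr ⟨fun B hB => ?_, by simp [List.map_map]⟩
    simp only [List.mem_append, List.mem_cons, reduceCtorEq, false_or] at hB
    exact hFor _ ⟨B, rfl⟩ (by simpa using hB)

theorem map_collapse_eq_of_toRCG_step {s₁ s₂ : List (Symb (Symb N T) T)}
    (h : G.toRCG.Step false s₁ s₂) (hs₁ : ∀ B, Sum.inl B ∉ s₁.map collapse) :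
    s₂.map collapse = s₁.map collapse := by
  obtain ⟨A', x', Per', For', u, v, hr, rfl, rfl, -, -⟩ := h
  rcases hr with ⟨⟨A, x, Per, For⟩, -, heq⟩ | ⟨a, -, heq⟩
  · obtain ⟨rfl, -⟩ := Prod.mk.injEq _ _ _ _ ▸ heq
    exact absurd (by simp [collapse]) (hs₁ A)
  · obtain ⟨rfl, rfl, -⟩ := Prod.mk.injEq _ _ _ _ ▸ heq
    simp [collapse]

/-- The second case is a word of `G` in which some terminals are still copies. -/
theorem toRCG_reachable_cases {s' : List (Symb (Symb N T) T)}
    (h : ReflTransGen (G.toRCG.Step false) [Sum.inl (Sum.inl G.start)] s') :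
    (∃ s, ReflTransGen (G.Step true) [Sum.inl G.start] s ∧ s' = s.map Sum.inl) ∨
      (ReflTransGen (G.Step true) [Sum.inl G.start] (s'.map collapse) ∧
        ∀ B, Sum.inl B ∉ s'.map collapse) := by
  induction h with
  | refl => exact Or.inl ⟨_, .refl, rfl⟩
  | tail _ hstep ih =>
    rcases ih with ⟨s, hs, rfl⟩ | ⟨hs, hterm⟩
    · rcases toRCG_step_map_inl_cases hstep with ⟨s', hstep', rfl⟩ | ⟨hterm, hcol⟩
      · exact Or.inl ⟨s', hs.tail hstep', rfl⟩
      · exact Or.inr ⟨hcol ▸ hs, hcol ▸ hterm⟩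
    · rw [← map_collapse_eq_of_toRCG_step hstep hterm] at hs hterm
      exact Or.inr ⟨hs, hterm⟩

theorem toRCG_lang : G.toRCG.Lang false = G.Lang true := by
  ext w
  constructor
  · intro hw
    rcases toRCG_reachable_cases hw with ⟨s, hs, hsw⟩ | ⟨hs, -⟩
    · obtain ⟨rfl, rfl⟩ : w = [] ∧ s = [] := by
        cases w <;> cases s <;> simp_all
      exact hs
    · have hcol : (w.map Sum.inr).map collapse = w.map (Sum.inr : T → Symb N T) := by
        simp [List.map_map, Function.comp_def]
      exact (hcol ▸ hs :)
  · intro hw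
    have hterm : ∀ a ∈ w, Sum.inr a ∈ rhsSymbols G.rules := fun a ha =>
      (mem_of_reflTransGen hw (List.mem_map_of_mem ha)).resolve_left (by simp)
    have hsim := ReflTransGen.lift _ (fun _ _ => toRCG_step_map_inl) _ _ hw
    exact hsim.trans (by simpa [List.map_map] using toRCG_reflTransGen_terminals [] hterm)

end SCG

/-! ### RC ⊆ SC(1,1) -/

namespace RCG

variable {N T : Type}

theorem mem_of_reflTransGen {G : RCG N T} {incl : Bool} {s₀ s : List (Symb N T)}
    (h : ReflTransGen (G.Step incl) s₀ s) {c : Symb N T} (hc : c ∈ s) :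
    c ∈ s₀ ∨ c ∈ rhsSymbols G.rules :=
  mem_of_reflTransGen_of_rewrite
    (fun _ _ ⟨_, x, _, _, u, v, hr, h₁, h₂, _⟩ => ⟨u, _, v, x, h₁, h₂, fun _ hc => ⟨_, hr, hc⟩⟩)
    h hc

abbrev Rule (N T : Type) := N × List (Symb N T) × Set N × Set N

abbrev Reaches (G : RCG N T) (s : List (Symb N T)) : Prop :=
  ReflTransGen (G.Step false) [Sum.inl G.start] s

def symbols (G : RCG N T) : Set (Symb N T) := insert (Sum.inl G.start) (rhsSymbols G.rules)

def nonterminals (G : RCG N T) : Set N := Sum.inl ⁻¹' G.symbols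

theorem symbols_finite (G : RCG N T) : G.symbols.Finite :=
  (rhsSymbols_finite G.fin).insert _

theorem nonterminals_finite (G : RCG N T) : G.nonterminals.Finite :=
  G.symbols_finite.preimage Sum.inl_injective.injOn

theorem mem_symbols_of_mem_rhs {G : RCG N T} {ρ : Rule N T} (hρ : ρ ∈ G.rules)
    {c : Symb N T} (hc : c ∈ ρ.2.1) : c ∈ G.symbols :=
  Set.mem_insert_of_mem _ ⟨ρ, hρ, hc⟩

theorem Reaches.mem_symbols {G : RCG N T} {s : List (Symb N T)} (hs : G.Reaches s)
    {c : Symb N T} (hc : c ∈ s) : c ∈ G.symbols := by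
  rcases mem_of_reflTransGen hs hc with hc | hc
  · exact List.mem_singleton.1 hc ▸ Set.mem_insert _ _
  · exact Set.mem_insert_of_mem _ hc

theorem Reaches.ne_nil {G : RCG N T} {s : List (Symb N T)} (hs : G.Reaches s) : s ≠ [] := by
  induction hs with
  | refl => simp
  | tail _ hstep _ =>
    obtain ⟨_, x, _, _, u, v, hr, -, rfl, -⟩ := hstep
    simp [G.ne _ hr]

/-- Nonterminals of the simulating grammar: copies `plain A` of the nonterminals of `G`, the
mark `marked ρ` of the occurrence rewritten by `ρ`, and the lock carrying the first symbol `X`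
of the form: `idle X`, then `armed ρ X` while marking, then `check ρ self P F X` while the
permitting symbols `P` and forbidding symbols `F` not yet tested are tested. The flag `self`
records that `ρ` rewrites `X` itself. -/
inductive LockNT (N T : Type) : Type
  | plain : N → LockNT N T
  | marked : Rule N T → LockNT N T
  | idle : Symb N T → LockNT N T
  | armed : Rule N T → Symb N T → LockNT N T
  | check : Rule N T → Bool → Set N → Set N → Symb N T → LockNT N T

open LockNT

def enc : Symb N T → Symb (LockNT N T) T := Sum.map plain id

def encode : List (Symb N T) → List (Symb (LockNT N T) T)
  | [] => []
  | X :: t => Sum.inl (idle X) :: t.map enc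

@[simp] theorem enc_inl (A : N) : (enc (Sum.inl A) : Symb (LockNT N T) T) = Sum.inl (plain A) :=
  rfl

@[simp] theorem enc_inr (a : T) : (enc (Sum.inr a) : Symb (LockNT N T) T) = Sum.inr a := rfl

theorem enc_injective : Function.Injective (enc : Symb N T → Symb (LockNT N T) T) :=
  Sum.map_injective.2 ⟨fun _ _ h => by cases h; rfl, Function.injective_id⟩

@[simp] theorem inl_mem_map_enc {n : LockNT N T} {t : List (Symb N T)} :
    Sum.inl n ∈ t.map enc ↔ ∃ B, n = plain B ∧ Sum.inl B ∈ t := by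
  constructor
  · intro h
    obtain ⟨c | c, hc, he⟩ := List.mem_map.1 h <;> cases he
    exact ⟨c, rfl, hc⟩
  · rintro ⟨B, rfl, hB⟩
    exact List.mem_map.2 ⟨_, hB, rfl⟩

@[simp] theorem inr_mem_map_enc {a : T} {t : List (Symb N T)} :
    (Sum.inr a : Symb (LockNT N T) T) ∈ t.map enc ↔ Sum.inr a ∈ t := by
  constructor
  · intro h
    obtain ⟨c | c, hc, he⟩ := List.mem_map.1 h <;> cases he
    exact hc
  · exact fun h => List.mem_map.2 ⟨_, h, rfl⟩

theorem map_enc_eq_append_cons {t : List (Symb N T)} {u v : List (Symb (LockNT N T) T)}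
    {B : N} (h : t.map enc = u ++ Sum.inl (plain B) :: v) :
    ∃ t₁ t₂, t = t₁ ++ Sum.inl B :: t₂ ∧ u = t₁.map enc ∧ v = t₂.map enc := by
  obtain ⟨t₁, _, rfl, rfl, c, t₂, rfl, hc, rfl⟩ :
      ∃ t₁ w, t = t₁ ++ w ∧ t₁.map enc = u ∧
        ∃ c t₂, w = c :: t₂ ∧ enc c = Sum.inl (plain B) ∧ t₂.map enc = v := by
    simpa only [List.map_eq_append_iff, List.map_eq_cons_iff] using h
  obtain rfl : c = Sum.inl B := enc_injective hc
  exact ⟨t₁, t₂, rfl, rfl, rfl⟩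

@[simp] theorem length_encode (l : List (Symb N T)) :
    (encode l : List (Symb (LockNT N T) T)).length = l.length := by
  cases l <;> simp [encode]

theorem encode_append {x : List (Symb N T)} (hx : x ≠ []) (v : List (Symb N T)) :
    (encode (x ++ v) : List (Symb (LockNT N T) T)) = encode x ++ v.map enc := by
  obtain ⟨X, t, rfl⟩ := List.exists_cons_of_ne_nil hx
  simp [encode]

section Construction

variable (G : RCG N T)

def LockNT.Bounded : LockNT N T → Prop
  | plain A => A ∈ G.nonterminals
  | marked ρ => ρ ∈ G.rules
  | idle X => X ∈ G.symbols
  | armed ρ X => ρ ∈ G.rules ∧ X ∈ G.symbols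
  | check ρ _ P F X => ρ ∈ G.rules ∧ P ⊆ G.nonterminals ∧ F ⊆ G.nonterminals ∧ X ∈ G.symbols

theorem LockNT.finite_bounded : {n : LockNT N T | n.Bounded G}.Finite := by
  have hS := G.symbols_finite
  have hN := G.nonterminals_finite
  refine ((((hN.image plain).union (G.fin.image marked)).union (hS.image idle)).union
    (((G.fin.prod hS).image fun p => armed p.1 p.2).union
      ((G.fin.prod (Set.finite_univ.prod (hN.finite_subsets.prod
        (hN.finite_subsets.prod hS)))).image
        fun p => check p.1 p.2.1 p.2.2.1 p.2.2.2.1 p.2.2.2.2))).subset ?_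
  rintro (A | ρ | X | ⟨ρ, X⟩ | ⟨ρ, h, P, F, X⟩) hn
  · exact Or.inl (Or.inl (Or.inl ⟨A, hn, rfl⟩))
  · exact Or.inl (Or.inl (Or.inr ⟨ρ, hn, rfl⟩))
  · exact Or.inl (Or.inr ⟨X, hn, rfl⟩)
  · exact Or.inr (Or.inl ⟨(ρ, X), hn, rfl⟩)
  · exact Or.inr (Or.inr ⟨(ρ, h, P, F, X), ⟨hn.1, trivial, hn.2.1, hn.2.2.1, hn.2.2.2⟩, rfl⟩)

inductive SimRule : LockNT N T → List (Symb (LockNT N T) T) →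
    Set (Symb (LockNT N T) T) → Set (Symb (LockNT N T) T) → Prop
  | select (ρ X) (hρ : ρ ∈ G.rules) (hX : X ∈ G.symbols) :
      SimRule (idle X) [Sum.inl (armed ρ X)] ∅ ∅
  | mark (ρ X) (hρ : ρ ∈ G.rules) (hX : X ∈ G.symbols) (hA : ρ.1 ∈ G.nonterminals) :
      SimRule (plain ρ.1) [Sum.inl (marked ρ)] {Sum.inl (armed ρ X)} {Sum.inl (marked ρ)}
  -- The carried symbol `X` is part of the context `uv`: it passes the test of a permitting
  -- symbol at once, and fails that of a forbidding one (see `checkFor`).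
  | startCheck (ρ X) (hρ : ρ ∈ G.rules) (hX : X ∈ G.symbols) (hPer : ρ.2.2.1 ⊆ G.nonterminals) :
      SimRule (armed ρ X)
        [Sum.inl (check ρ false (ρ.2.2.1 \ Sum.inl ⁻¹' {X}) (ρ.2.2.2 ∩ G.nonterminals) X)]
        {Sum.inl (marked ρ)} ∅
  | selectSelf (ρ) (hρ : ρ ∈ G.rules) (hA : ρ.1 ∈ G.nonterminals)
      (hPer : ρ.2.2.1 ⊆ G.nonterminals) :
      SimRule (idle (Sum.inl ρ.1))
        [Sum.inl (check ρ true ρ.2.2.1 (ρ.2.2.2 ∩ G.nonterminals) (Sum.inl ρ.1))] ∅ ∅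
  | checkPer (ρ self P F X b) (hn : (check ρ self P F X).Bounded G) (hb : b ∈ P) :
      SimRule (check ρ self P F X) [Sum.inl (check ρ self (P \ {b}) F X)]
        {Sum.inl (plain b)} ∅
  | checkFor (ρ self P F X c) (hn : (check ρ self P F X).Bounded G) (hc : c ∈ F)
      (hX : self = true ∨ X ≠ Sum.inl c) :
      SimRule (check ρ self P F X) [Sum.inl (check ρ self P (F \ {c}) X)]
        ∅ {Sum.inl (plain c)}
  | apply (ρ X) (hρ : ρ ∈ G.rules) (hX : X ∈ G.symbols) :
      SimRule (marked ρ) (ρ.2.1.map enc) {Sum.inl (check ρ false ∅ ∅ X)} ∅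
  | unlock (ρ X) (hρ : ρ ∈ G.rules) (hX : X ∈ G.symbols) :
      SimRule (check ρ false ∅ ∅ X) [Sum.inl (idle X)] ∅ {Sum.inl (marked ρ)}
  | applySelf (ρ) (hρ : ρ ∈ G.rules) (hA : ρ.1 ∈ G.nonterminals) :
      SimRule (check ρ true ∅ ∅ (Sum.inl ρ.1)) (encode ρ.2.1) ∅ ∅
  | finish (a) (ha : Sum.inr a ∈ G.symbols) :
      SimRule (idle (Sum.inr a)) [Sum.inr a] ∅ ∅

def simAlphabet : Set (Symb (LockNT N T) T) :=
  Sum.inl '' {n | n.Bounded G} ∪ Sum.inr '' (Sum.inr ⁻¹' G.symbols)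

theorem simAlphabet_finite : (simAlphabet G).Finite :=
  ((LockNT.finite_bounded G).image _).union
    ((G.symbols_finite.preimage Sum.inr_injective.injOn).image _)

variable {G}

@[simp] theorem inl_mem_simAlphabet {n : LockNT N T} :
    Sum.inl n ∈ simAlphabet G ↔ n.Bounded G := by
  simp [simAlphabet]

@[simp] theorem enc_mem_simAlphabet {X : Symb N T} : enc X ∈ simAlphabet G ↔ X ∈ G.symbols := by
  cases X <;> simp [simAlphabet, LockNT.Bounded, nonterminals]

theorem mem_simAlphabet_of_mem_encode {l : List (Symb N T)} (hl : ∀ c ∈ l, c ∈ G.symbols) :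
    ∀ c ∈ encode l, c ∈ simAlphabet G := by
  cases l with
  | nil => simp [encode]
  | cons X t =>
    intro c hc
    rcases List.mem_cons.1 hc with rfl | hc
    · exact inl_mem_simAlphabet.2 (hl X List.mem_cons_self)
    · obtain ⟨d, hd, rfl⟩ := List.mem_map.1 hc
      exact enc_mem_simAlphabet.2 (hl d (List.mem_cons_of_mem _ hd))

theorem SimRule.mem_simAlphabet {A : LockNT N T} {x P F} (hr : SimRule G A x P F) :
    Sum.inl A ∈ simAlphabet G ∧ (∀ c ∈ x, c ∈ simAlphabet G) ∧ P ⊆ simAlphabet G ∧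
      F ⊆ simAlphabet G := by
  cases hr <;> simp only [inl_mem_simAlphabet, LockNT.Bounded, List.mem_singleton, forall_eq,
    Set.singleton_subset_iff, Set.empty_subset, and_true, true_and, List.mem_map,
    forall_exists_index, and_imp, forall_apply_eq_imp_iff₂, enc_mem_simAlphabet]
  case select ρ X hρ hX => exact ⟨hX, hρ, hX⟩
  case mark ρ X hρ hX hA => exact ⟨hA, hρ, ⟨hρ, hX⟩, hρ⟩
  case startCheck ρ X hρ hX hPer =>
    exact ⟨⟨hρ, hX⟩, ⟨hρ, Set.sdiff_subset.trans hPer, Set.inter_subset_right, hX⟩, hρ⟩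
  case selectSelf ρ hρ hA hPer => exact ⟨hA, hρ, hPer, Set.inter_subset_right, hA⟩
  case checkPer b hn hb => exact ⟨hn, ⟨hn.1, Set.sdiff_subset.trans hn.2.1, hn.2.2⟩, hn.2.1 hb⟩
  case checkFor c hn hc _ =>
    exact ⟨hn, ⟨hn.1, hn.2.1, Set.sdiff_subset.trans hn.2.2.1, hn.2.2.2⟩, hn.2.2.1 hc⟩
  case apply ρ X hρ hX => exact ⟨hρ, fun _ => mem_symbols_of_mem_rhs hρ, hρ, hX⟩
  case unlock ρ X hρ hX => exact ⟨⟨hρ, hX⟩, hX, hρ⟩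
  case applySelf ρ hρ hA =>
    exact ⟨⟨hρ, hA⟩, mem_simAlphabet_of_mem_encode fun _ => mem_symbols_of_mem_rhs hρ⟩
  case finish a ha => exact ⟨ha, (enc_mem_simAlphabet (X := Sum.inr a)).2 ha⟩

theorem SimRule.length_le {L : ℕ} (hL : ∀ ρ ∈ G.rules, ρ.2.1.length ≤ L) {A : LockNT N T}
    {x P F} (hr : SimRule G A x P F) : x.length ≤ L + 1 := by
  cases hr with
  | apply ρ _ hρ _ => simpa using (hL ρ hρ).trans L.le_succ
  | applySelf ρ hρ _ => simpa using (hL ρ hρ).trans L.le_succ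
  | _ => simp

variable (G)

def toSCG : SCG (LockNT N T) T where
  rules := {r | SimRule G r.1 r.2.1 r.2.2.1 r.2.2.2}
  fin := by
    obtain ⟨L, hL⟩ := (G.fin.image fun ρ : Rule N T => ρ.2.1.length).bddAbove
    refine finite_productions_of_bounded (simAlphabet_finite G) Sum.inl Sum.inl_injective (L + 1)
      fun r hr => ?_
    obtain ⟨hA, hx, hP, hF⟩ := SimRule.mem_simAlphabet hr
    exact ⟨hA, hr.length_le fun ρ hρ => hL ⟨ρ, hρ, rfl⟩, hx, hP, hF⟩
  ne := by
    rintro ⟨A, x, P, F⟩ hr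
    cases hr with
    | apply ρ _ hρ _ => simpa using G.ne ρ hρ
    | applySelf ρ hρ _ =>
      obtain ⟨X, t, hx⟩ := List.exists_cons_of_ne_nil (G.ne ρ hρ)
      simp [hx]
    | _ => simp
  per1 := by
    rintro ⟨A, x, P, F⟩ hr
    cases hr <;> first | exact Set.subsingleton_empty | exact Set.subsingleton_singleton
  for1 := by
    rintro ⟨A, x, P, F⟩ hr
    cases hr <;> first | exact Set.subsingleton_empty | exact Set.subsingleton_singleton
  start := idle (Sum.inl G.start)

end Construction

variable {G : RCG N T}

theorem applicable_plain {s : List (Symb (LockNT N T) T)} {B : N} {x}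
    (h : G.toSCG.Applicable s (plain B) x) :
    ∃ ρ X, B = ρ.1 ∧ x = [Sum.inl (marked ρ)] ∧ Sum.inl (armed ρ X) ∈ s ∧
      Sum.inl (marked ρ) ∉ s := by
  obtain ⟨P, F, hr, hP, hF⟩ := h
  change SimRule G _ _ _ _ at hr
  cases hr with
  | mark ρ X => exact ⟨ρ, X, rfl, rfl, hP rfl, hF _ rfl⟩

theorem applicable_marked {s : List (Symb (LockNT N T) T)} {ρ : Rule N T} {x}
    (h : G.toSCG.Applicable s (marked ρ) x) :
    ρ ∈ G.rules ∧ x = ρ.2.1.map enc ∧ ∃ X, Sum.inl (check ρ false ∅ ∅ X) ∈ s := by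
  obtain ⟨P, F, hr, hP, -⟩ := h
  change SimRule G _ _ _ _ at hr
  cases hr with
  | apply _ X hρ => exact ⟨hρ, rfl, X, hP rfl⟩

theorem applicable_idle {s : List (Symb (LockNT N T) T)} {X : Symb N T} {x}
    (h : G.toSCG.Applicable s (idle X) x) :
    (∃ ρ, x = [Sum.inl (armed ρ X)]) ∨
      (∃ ρ : Rule N T, X = Sum.inl ρ.1 ∧
        x = [Sum.inl (check ρ true ρ.2.2.1 (ρ.2.2.2 ∩ G.nonterminals) X)]) ∨
      ∃ a, X = Sum.inr a ∧ x = [Sum.inr a] := by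
  obtain ⟨P, F, hr, -, -⟩ := h
  change SimRule G _ _ _ _ at hr
  cases hr with
  | select ρ => exact Or.inl ⟨ρ, rfl⟩
  | selectSelf ρ => exact Or.inr (Or.inl ⟨ρ, rfl, rfl⟩)
  | finish a => exact Or.inr (Or.inr ⟨a, rfl, rfl⟩)

theorem applicable_armed {s : List (Symb (LockNT N T) T)} {ρ : Rule N T} {X : Symb N T} {x}
    (h : G.toSCG.Applicable s (armed ρ X) x) :
    Sum.inl (marked ρ) ∈ s ∧
      x = [Sum.inl (check ρ false (ρ.2.2.1 \ Sum.inl ⁻¹' {X}) (ρ.2.2.2 ∩ G.nonterminals) X)] := by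
  obtain ⟨P, F, hr, hP, -⟩ := h
  change SimRule G _ _ _ _ at hr
  cases hr with
  | startCheck => exact ⟨hP rfl, rfl⟩

theorem applicable_check {s : List (Symb (LockNT N T) T)} {ρ : Rule N T} {self : Bool}
    {P F : Set N} {X : Symb N T} {x} (h : G.toSCG.Applicable s (check ρ self P F X) x) :
    (∃ b ∈ P, Sum.inl (plain b) ∈ s ∧ x = [Sum.inl (check ρ self (P \ {b}) F X)]) ∨
      (∃ c ∈ F, (self = true ∨ X ≠ Sum.inl c) ∧ Sum.inl (plain c) ∉ s ∧
        x = [Sum.inl (check ρ self P (F \ {c}) X)]) ∨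
      (self = false ∧ P = ∅ ∧ F = ∅ ∧ Sum.inl (marked ρ) ∉ s ∧ x = [Sum.inl (idle X)]) ∨
      (self = true ∧ P = ∅ ∧ F = ∅ ∧ ρ ∈ G.rules ∧ x = encode ρ.2.1) := by
  obtain ⟨P', F', hr, hP, hF⟩ := h
  change SimRule G _ _ _ _ at hr
  cases hr with
  | checkPer _ _ _ _ _ b _ hb => exact Or.inl ⟨b, hb, hP rfl, rfl⟩
  | checkFor _ _ _ _ _ c _ hc hX => exact Or.inr (Or.inl ⟨c, hc, hX, hF _ rfl, rfl⟩)
  | unlock => exact Or.inr (Or.inr (Or.inl ⟨rfl, rfl, rfl, hF _ rfl, rfl⟩))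
  | applySelf _ hρ => exact Or.inr (Or.inr (Or.inr ⟨rfl, rfl, rfl, hρ, rfl⟩))

theorem applicable_of_mem_unmarked {a : Symb (LockNT N T) T} {t : List (Symb N T)}
    {A : LockNT N T} {x} (h : G.toSCG.Applicable (a :: t.map enc) A x)
    (hA : Sum.inl A ∈ t.map enc) :
    ∃ ρ X, a = Sum.inl (armed ρ X) ∧ A = plain ρ.1 ∧ x = [Sum.inl (marked ρ)] := by
  obtain ⟨B, rfl, -⟩ := inl_mem_map_enc.1 hA
  obtain ⟨ρ, X, rfl, rfl, harmed, -⟩ := applicable_plain h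
  simp only [List.mem_cons, inl_mem_map_enc, reduceCtorEq, false_and, exists_false,
    or_false] at harmed
  exact ⟨ρ, X, harmed.symm, rfl, rfl⟩

theorem applicable_of_mem_marked {c : LockNT N T} {ρ : Rule N T} {t₁ t₂ : List (Symb N T)}
    {A : LockNT N T} {x}
    (h : G.toSCG.Applicable (Sum.inl c :: (t₁.map enc ++ Sum.inl (marked ρ) :: t₂.map enc)) A x)
    (hA : Sum.inl A ∈ t₁.map enc ++ Sum.inl (marked ρ) :: t₂.map enc)
    (hc : ∀ ρ' X, c = armed ρ' X → ρ' = ρ) :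
    A = marked ρ ∧ ρ ∈ G.rules ∧ x = ρ.2.1.map enc ∧ ∃ X, c = check ρ false ∅ ∅ X := by
  have hplain : ∀ B, A ≠ plain B := by
    rintro B rfl
    obtain ⟨ρ', X, rfl, rfl, harmed, hmarked⟩ := applicable_plain h
    obtain rfl := hc ρ' X (by simpa [eq_comm] using harmed)
    simp at hmarked
  simp only [List.mem_append, List.mem_cons, inl_mem_map_enc, Sum.inl.injEq] at hA
  rcases hA with ⟨B, hB, -⟩ | rfl | ⟨B, hB, -⟩
  · exact absurd hB (hplain B)
  · obtain ⟨hρ, rfl, X, hX⟩ := applicable_marked h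
    exact ⟨rfl, hρ, rfl, X, by simpa [eq_comm] using hX⟩
  · exact absurd hB (hplain B)

/-- The checks of `ρ` already performed against the context `ctx` (the form without the
rewritten occurrence of `ρ.1`): the permitting symbols outside `P` occur in it and the forbidding
symbols outside `F` do not. -/
def Checked (G : RCG N T) (ρ : Rule N T) (P F : Set N) (ctx : List (Symb N T)) : Prop :=
  (∀ b ∈ ρ.2.2.1 \ P, Sum.inl b ∈ ctx) ∧ ∀ c ∈ (ρ.2.2.2 ∩ G.nonterminals) \ F, Sum.inl c ∉ ctx

section Checked

variable {ρ : Rule N T} {P F : Set N} {ctx : List (Symb N T)}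

theorem Checked.erase_per (h : G.Checked ρ P F ctx) {b : N} (hb : Sum.inl b ∈ ctx) :
    G.Checked ρ (P \ {b}) F ctx := by
  refine ⟨fun b' hb' => ?_, h.2⟩
  by_cases hbb' : b' = b
  · exact hbb' ▸ hb
  · exact h.1 b' ⟨hb'.1, fun hP => hb'.2 ⟨hP, hbb'⟩⟩

theorem Checked.erase_for (h : G.Checked ρ P F ctx) {c : N} (hc : Sum.inl c ∉ ctx) :
    G.Checked ρ P (F \ {c}) ctx := by
  refine ⟨h.1, fun c' hc' => ?_⟩
  by_cases hcc' : c' = c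
  · exact hcc' ▸ hc
  · exact h.2 c' ⟨hc'.1, fun hF => hc'.2 ⟨hF, hcc'⟩⟩

theorem checked_start (ρ : Rule N T) (X : Symb N T) (l : List (Symb N T)) :
    G.Checked ρ (ρ.2.2.1 \ Sum.inl ⁻¹' {X}) (ρ.2.2.2 ∩ G.nonterminals) (X :: l) :=
  ⟨fun _ hb => List.mem_cons.2 (Or.inl (not_not.1 fun h => hb.2 ⟨hb.1, h⟩)),
    fun _ hc => absurd hc.1 hc.2⟩

theorem checked_start_self (ρ : Rule N T) (l : List (Symb N T)) :
    G.Checked ρ ρ.2.2.1 (ρ.2.2.2 ∩ G.nonterminals) l :=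
  ⟨fun _ hb => absurd hb.1 hb.2, fun _ hc => absurd hc.1 hc.2⟩

theorem Checked.reaches {u v : List (Symb N T)} (h : G.Checked ρ ∅ ∅ (u ++ v))
    (hρ : ρ ∈ G.rules) (hs : G.Reaches (u ++ Sum.inl ρ.1 :: v)) : G.Reaches (u ++ ρ.2.1 ++ v) := by
  refine hs.tail ⟨ρ.1, ρ.2.1, ρ.2.2.1, ρ.2.2.2, u, v, hρ, rfl, rfl, ?_, ?_⟩
  · exact fun B hB => h.1 B ⟨hB, Set.notMem_empty B⟩
  · intro B hB hmem
    have hmem : Sum.inl B ∈ u ++ v := hmem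
    have hBN : B ∈ G.nonterminals :=
      hs.mem_symbols (List.mem_append.2 ((List.mem_append.1 hmem).imp id (List.mem_cons_of_mem _)))
    exact h.2 B ⟨⟨hB, hBN⟩, Set.notMem_empty B⟩ hmem

end Checked

variable (G) in
/-- The forms reachable in `G.toSCG`, each with the form of `G` it simulates. -/
inductive SimForm : List (Symb (LockNT N T) T) → Prop
  | idle (X : Symb N T) (t : List (Symb N T)) : G.Reaches (X :: t) →
      SimForm (Sum.inl (idle X) :: t.map enc)
  | armed (ρ : Rule N T) (X : Symb N T) (t : List (Symb N T)) : G.Reaches (X :: t) →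
      SimForm (Sum.inl (armed ρ X) :: t.map enc)
  | marked (ρ : Rule N T) (X : Symb N T) (t₁ t₂ : List (Symb N T)) :
      G.Reaches (X :: t₁ ++ Sum.inl ρ.1 :: t₂) →
      SimForm (Sum.inl (armed ρ X) :: (t₁.map enc ++ Sum.inl (marked ρ) :: t₂.map enc))
  | checking (ρ : Rule N T) (P F : Set N) (X : Symb N T) (t₁ t₂ : List (Symb N T)) :
      G.Reaches (X :: t₁ ++ Sum.inl ρ.1 :: t₂) → G.Checked ρ P F (X :: t₁ ++ t₂) →
      SimForm (Sum.inl (check ρ false P F X) :: (t₁.map enc ++ Sum.inl (marked ρ) :: t₂.map enc))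
  | checkingSelf (ρ : Rule N T) (P F : Set N) (t : List (Symb N T)) :
      G.Reaches (Sum.inl ρ.1 :: t) → G.Checked ρ P F t →
      SimForm (Sum.inl (check ρ true P F (Sum.inl ρ.1)) :: t.map enc)
  | applied (ρ : Rule N T) (X : Symb N T) (t : List (Symb N T)) : G.Reaches (X :: t) →
      SimForm (Sum.inl (check ρ false ∅ ∅ X) :: t.map enc)
  | terminal (a : T) (t : List (Symb N T)) : G.Reaches (Sum.inr a :: t) →
      SimForm (Sum.inr a :: t.map enc)

theorem simForm_step_idle {X : Symb N T} {t s₂} (hs : G.Reaches (X :: t))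
    (h : G.toSCG.Step true (Sum.inl (idle X) :: t.map enc) s₂) : G.SimForm s₂ := by
  rcases SCG.step_true_cons h with ⟨A, x, hA, rfl, happ⟩ | ⟨u, A, v, x, ht, -, happ⟩
  · cases hA
    rcases applicable_idle happ with ⟨ρ, rfl⟩ | ⟨ρ, rfl, rfl⟩ | ⟨a, rfl, rfl⟩
    · exact .armed ρ X t hs
    · exact .checkingSelf ρ _ _ t hs (checked_start_self ρ t)
    · exact .terminal a t hs
  · obtain ⟨_, _, h', -⟩ := applicable_of_mem_unmarked happ (by simp [ht])
    cases h'

theorem simForm_step_armed {ρ : Rule N T} {X : Symb N T} {t s₂} (hs : G.Reaches (X :: t))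
    (h : G.toSCG.Step true (Sum.inl (armed ρ X) :: t.map enc) s₂) : G.SimForm s₂ := by
  rcases SCG.step_true_cons h with ⟨A, x, hA, rfl, happ⟩ | ⟨u, A, v, x, ht, rfl, happ⟩
  · cases hA
    simpa using (applicable_armed happ).1
  · obtain ⟨_, _, h', rfl, rfl⟩ := applicable_of_mem_unmarked happ (by simp [ht])
    cases h'
    obtain ⟨t₁, t₂, rfl, rfl, rfl⟩ := map_enc_eq_append_cons ht
    simpa using SimForm.marked ρ X t₁ t₂ hs

theorem simForm_step_marked {ρ : Rule N T} {X : Symb N T} {t₁ t₂ s₂}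
    (hs : G.Reaches (X :: t₁ ++ Sum.inl ρ.1 :: t₂))
    (h : G.toSCG.Step true
      (Sum.inl (armed ρ X) :: (t₁.map enc ++ Sum.inl (marked ρ) :: t₂.map enc)) s₂) :
    G.SimForm s₂ := by
  rcases SCG.step_true_cons h with ⟨A, x, hA, rfl, happ⟩ | ⟨u, A, v, x, ht, -, happ⟩
  · cases hA
    obtain ⟨-, rfl⟩ := applicable_armed happ
    exact .checking ρ _ _ X t₁ t₂ hs (checked_start ρ X _)
  · obtain ⟨-, -, -, _, h'⟩ :=
      applicable_of_mem_marked happ (by simp [ht]) fun _ _ h => by cases h; rfl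
    cases h'

theorem simForm_step_checking {ρ : Rule N T} {P F : Set N} {X : Symb N T} {t₁ t₂ s₂}
    (hs : G.Reaches (X :: t₁ ++ Sum.inl ρ.1 :: t₂)) (hchk : G.Checked ρ P F (X :: t₁ ++ t₂))
    (h : G.toSCG.Step true
      (Sum.inl (check ρ false P F X) :: (t₁.map enc ++ Sum.inl (marked ρ) :: t₂.map enc)) s₂) :
    G.SimForm s₂ := by
  rcases SCG.step_true_cons h with ⟨A, x, hA, rfl, happ⟩ | ⟨u, A, v, x, ht, rfl, happ⟩
  · cases hA
    rcases applicable_check happ with ⟨b, -, hb, rfl⟩ | ⟨c, -, hX, hc, rfl⟩ |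
      ⟨-, -, -, hmarked, -⟩ | ⟨h', -⟩
    · exact .checking ρ _ F X t₁ t₂ hs
        (hchk.erase_per (List.mem_cons_of_mem _ (by simpa using hb)))
    · have hX : Sum.inl c ≠ X := (hX.resolve_left Bool.false_ne_true).symm
      refine .checking ρ P _ X t₁ t₂ hs (hchk.erase_for ?_)
      simpa [hX] using hc
    · simp at hmarked
    · cases h'
  · obtain ⟨rfl, hρ, rfl, X', h'⟩ :=
      applicable_of_mem_marked happ (by simp [ht]) fun _ _ h => by cases h
    cases h'
    obtain ⟨rfl, -, rfl⟩ := (List.append_cons_inj_of_notMem (by simp) (by simp)).1 ht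
    simpa using SimForm.applied ρ X (t₁ ++ ρ.2.1 ++ t₂) (hchk.reaches hρ hs)

theorem simForm_step_checkingSelf {ρ : Rule N T} {P F : Set N} {t s₂}
    (hs : G.Reaches (Sum.inl ρ.1 :: t)) (hchk : G.Checked ρ P F t)
    (h : G.toSCG.Step true (Sum.inl (check ρ true P F (Sum.inl ρ.1)) :: t.map enc) s₂) :
    G.SimForm s₂ := by
  rcases SCG.step_true_cons h with ⟨A, x, hA, rfl, happ⟩ | ⟨u, A, v, x, ht, -, happ⟩
  · cases hA
    rcases applicable_check happ with ⟨b, -, hb, rfl⟩ | ⟨c, -, -, hc, rfl⟩ |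
      ⟨h', -⟩ | ⟨-, rfl, rfl, hρ, rfl⟩
    · exact .checkingSelf ρ _ F t hs (hchk.erase_per (by simpa using hb))
    · exact .checkingSelf ρ P _ t hs (hchk.erase_for (by simpa using hc))
    · cases h'
    · obtain ⟨X, xs, hx⟩ := List.exists_cons_of_ne_nil (G.ne ρ hρ)
      have := hchk.reaches (u := []) hρ hs
      rw [hx] at this ⊢
      simpa [encode] using SimForm.idle X (xs ++ t) this
  · obtain ⟨_, _, h', -⟩ := applicable_of_mem_unmarked happ (by simp [ht])
    cases h'

theorem simForm_step_applied {ρ : Rule N T} {X : Symb N T} {t s₂} (hs : G.Reaches (X :: t))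
    (h : G.toSCG.Step true (Sum.inl (check ρ false ∅ ∅ X) :: t.map enc) s₂) :
    G.SimForm s₂ := by
  rcases SCG.step_true_cons h with ⟨A, x, hA, rfl, happ⟩ | ⟨u, A, v, x, ht, -, happ⟩
  · cases hA
    rcases applicable_check happ with ⟨b, hb, -⟩ | ⟨c, hc, -⟩ | ⟨-, -, -, -, rfl⟩ | ⟨h', -⟩
    · exact absurd hb (Set.notMem_empty b)
    · exact absurd hc (Set.notMem_empty c)
    · exact .idle X t hs
    · cases h'
  · obtain ⟨_, _, h', -⟩ := applicable_of_mem_unmarked happ (by simp [ht])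
    cases h'

theorem simForm_step_terminal {a : T} {t : List (Symb N T)} {s₂}
    (h : G.toSCG.Step true (Sum.inr a :: t.map enc) s₂) : G.SimForm s₂ := by
  rcases SCG.step_true_cons h with ⟨A, x, hA, -⟩ | ⟨u, A, v, x, ht, -, happ⟩
  · cases hA
  · obtain ⟨_, _, h', -⟩ := applicable_of_mem_unmarked happ (by simp [ht])
    cases h'

theorem SimForm.step {s₁ s₂ : List (Symb (LockNT N T) T)} (hs₁ : G.SimForm s₁)
    (h : G.toSCG.Step true s₁ s₂) : G.SimForm s₂ := by
  cases hs₁ with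
  | idle X t hs => exact simForm_step_idle hs h
  | armed ρ X t hs => exact simForm_step_armed hs h
  | marked ρ X t₁ t₂ hs => exact simForm_step_marked hs h
  | checking ρ P F X t₁ t₂ hs hchk => exact simForm_step_checking hs hchk h
  | checkingSelf ρ P F t hs hchk => exact simForm_step_checkingSelf hs hchk h
  | applied ρ X t hs => exact simForm_step_applied hs h
  | terminal a t _ => exact simForm_step_terminal h

theorem SimForm.of_reflTransGen {s : List (Symb (LockNT N T) T)}
    (h : ReflTransGen (G.toSCG.Step true) [Sum.inl G.toSCG.start] s) : G.SimForm s := by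
  induction h with
  | refl => exact .idle _ [] .refl
  | tail _ hstep ih => exact ih.step hstep

theorem SimRule.step {A : LockNT N T} {x P F} (hr : SimRule G A x P F)
    (u v : List (Symb (LockNT N T) T)) (hP : ∀ p ∈ P, p ∈ u ++ Sum.inl A :: v)
    (hF : ∀ q ∈ F, q ∉ u ++ Sum.inl A :: v) :
    G.toSCG.Step true (u ++ Sum.inl A :: v) (u ++ x ++ v) :=
  ⟨A, x, P, F, u, v, hr, rfl, rfl, hP, hF⟩

theorem reflTransGen_checkPer {ρ : Rule N T} {self : Bool} {P F : Set N} {X : Symb N T}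
    {l : List (Symb (LockNT N T) T)} (hn : (check ρ self P F X).Bounded G)
    (hP : ∀ b ∈ P, Sum.inl (plain b) ∈ l) :
    ReflTransGen (G.toSCG.Step true) (Sum.inl (check ρ self P F X) :: l)
      (Sum.inl (check ρ self ∅ F X) :: l) :=
  reflTransGen_of_forall_erase (fun Q => Sum.inl (check ρ self Q F X) :: l)
    (G.nonterminals_finite.subset hn.2.1) fun Q hQ b hb =>
      (SimRule.checkPer ρ self Q F X b ⟨hn.1, hQ.trans hn.2.1, hn.2.2⟩ hb).step [] l
        (by simpa using hP b (hQ hb)) (by simp)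

theorem reflTransGen_checkFor {ρ : Rule N T} {self : Bool} {P F : Set N} {X : Symb N T}
    {l : List (Symb (LockNT N T) T)} (hn : (check ρ self P F X).Bounded G)
    (hF : ∀ c ∈ F, (self = true ∨ X ≠ Sum.inl c) ∧ Sum.inl (plain c) ∉ l) :
    ReflTransGen (G.toSCG.Step true) (Sum.inl (check ρ self P F X) :: l)
      (Sum.inl (check ρ self P ∅ X) :: l) :=
  reflTransGen_of_forall_erase (fun Q => Sum.inl (check ρ self P Q X) :: l)
    (G.nonterminals_finite.subset hn.2.2.1) fun Q hQ c hc =>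
      (SimRule.checkFor ρ self P Q X c ⟨hn.1, hn.2.1, hQ.trans hn.2.2.1, hn.2.2.2⟩ hc
        (hF c (hQ hc)).1).step [] l (by simp) (by simpa using (hF c (hQ hc)).2)

theorem reflTransGen_checks {ρ : Rule N T} {self : Bool} {P F : Set N} {X : Symb N T}
    {l : List (Symb (LockNT N T) T)} (hn : (check ρ self P F X).Bounded G)
    (hP : ∀ b ∈ P, Sum.inl (plain b) ∈ l)
    (hF : ∀ c ∈ F, (self = true ∨ X ≠ Sum.inl c) ∧ Sum.inl (plain c) ∉ l) :
    ReflTransGen (G.toSCG.Step true) (Sum.inl (check ρ self P F X) :: l)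
      (Sum.inl (check ρ self ∅ ∅ X) :: l) :=
  (reflTransGen_checkPer hn hP).trans
    (reflTransGen_checkFor ⟨hn.1, Set.empty_subset _, hn.2.2⟩ hF)

theorem reflTransGen_encode_self {ρ : Rule N T} (hρ : ρ ∈ G.rules) {v : List (Symb N T)}
    (hs : G.Reaches (Sum.inl ρ.1 :: v)) (hPer : ∀ B ∈ ρ.2.2.1, Sum.inl B ∈ v)
    (hFor : ∀ B ∈ ρ.2.2.2, Sum.inl B ∉ v) :
    ReflTransGen (G.toSCG.Step true) (encode (Sum.inl ρ.1 :: v)) (encode (ρ.2.1 ++ v)) := by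
  have hA : ρ.1 ∈ G.nonterminals := hs.mem_symbols List.mem_cons_self
  have hPer' : ρ.2.2.1 ⊆ G.nonterminals := fun B hB =>
    hs.mem_symbols (List.mem_cons_of_mem _ (hPer B hB))
  have hn : (check ρ true ρ.2.2.1 (ρ.2.2.2 ∩ G.nonterminals) (Sum.inl ρ.1)).Bounded G :=
    ⟨hρ, hPer', Set.inter_subset_right, hA⟩
  rw [encode_append (G.ne ρ hρ)]
  refine .head ((SimRule.selectSelf ρ hρ hA hPer').step [] _ (by simp) (by simp)) ?_
  refine .trans (reflTransGen_checks hn (by simpa using hPer)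
    fun c hc => ⟨Or.inl rfl, by simpa using hFor c hc.1⟩) ?_
  exact .single ((SimRule.applySelf ρ hρ hA).step [] _ (by simp) (by simp))

theorem reflTransGen_encode_other {ρ : Rule N T} (hρ : ρ ∈ G.rules) {X : Symb N T}
    {u v : List (Symb N T)} (hs : G.Reaches (X :: u ++ Sum.inl ρ.1 :: v))
    (hPer : ∀ B ∈ ρ.2.2.1, Sum.inl B ∈ X :: u ++ v)
    (hFor : ∀ B ∈ ρ.2.2.2, Sum.inl B ∉ X :: u ++ v) :
    ReflTransGen (G.toSCG.Step true) (encode (X :: u ++ Sum.inl ρ.1 :: v))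
      (encode (X :: u ++ ρ.2.1 ++ v)) := by
  have hX : X ∈ G.symbols := hs.mem_symbols List.mem_cons_self
  have hA : ρ.1 ∈ G.nonterminals := hs.mem_symbols (by simp)
  have hPer' : ρ.2.2.1 ⊆ G.nonterminals := fun B hB =>
    hs.mem_symbols (by simpa [or_left_comm] using Or.inr (hPer B hB))
  set body := u.map enc ++ Sum.inl (marked ρ) :: v.map enc
  have hchecks : ReflTransGen (G.toSCG.Step true)
      (Sum.inl (check ρ false (ρ.2.2.1 \ Sum.inl ⁻¹' {X}) (ρ.2.2.2 ∩ G.nonterminals) X) :: body)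
      (Sum.inl (check ρ false ∅ ∅ X) :: body) := by
    refine reflTransGen_checks ⟨hρ, Set.sdiff_subset.trans hPer', Set.inter_subset_right, hX⟩
      (fun b hb => ?_) fun c hc => ?_
    · have : Sum.inl b = X ∨ Sum.inl b ∈ u ∨ Sum.inl b ∈ v := by simpa using hPer b hb.1
      have hbX : Sum.inl b ≠ X := hb.2
      simpa [body, hbX] using this
    · obtain ⟨hcX, hcu, hcv⟩ : Sum.inl c ≠ X ∧ Sum.inl c ∉ u ∧ Sum.inl c ∉ v := by
        simpa using hFor c hc.1
      exact ⟨Or.inr (Ne.symm hcX), by simp [body, hcu, hcv]⟩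
  have hselect := (SimRule.select ρ X hρ hX).step []
    (u.map enc ++ Sum.inl (plain ρ.1) :: v.map enc) (by simp) (by simp)
  have hmark := (SimRule.mark ρ X hρ hX hA).step (Sum.inl (armed ρ X) :: u.map enc)
    (v.map enc) (by simp) (by simp)
  have hstart := (SimRule.startCheck ρ X hρ hX hPer').step [] body (by simp [body]) (by simp)
  have happly := (SimRule.apply ρ X hρ hX).step (Sum.inl (check ρ false ∅ ∅ X) :: u.map enc)
    (v.map enc) (by simp) (by simp)
  have hunlock := (SimRule.unlock ρ X hρ hX).step [] (u.map enc ++ ρ.2.1.map enc ++ v.map enc)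
    (by simp) (by simp)
  simp only [List.nil_append, List.cons_append, List.append_assoc]
    at hselect hmark hstart happly hunlock
  simpa [encode] using .head hselect (.head hmark (.head hstart
    (hchecks.trans (.head happly (.single hunlock)))))

theorem reflTransGen_encode_of_step {s₁ s₂ : List (Symb N T)} (hs : G.Reaches s₁)
    (h : G.Step false s₁ s₂) :
    ReflTransGen (G.toSCG.Step true) (encode s₁) (encode s₂) := by
  obtain ⟨A, x, Per, For, u, v, hρ, rfl, rfl, hPer, hFor⟩ := h
  rcases u with _ | ⟨X, u⟩
  · exact reflTransGen_encode_self (ρ := (A, x, Per, For)) hρ hs hPer hFor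
  · exact reflTransGen_encode_other (ρ := (A, x, Per, For)) hρ hs hPer hFor

theorem reflTransGen_encode {s : List (Symb N T)} (hs : G.Reaches s) :
    ReflTransGen (G.toSCG.Step true) [Sum.inl G.toSCG.start] (encode s) := by
  induction hs with
  | refl => exact .refl
  | tail hs hstep ih => exact ih.trans (reflTransGen_encode_of_step hs hstep)

theorem toSCG_lang : G.toSCG.Lang true = G.Lang false := by
  ext w
  constructor
  · intro hw
    have hsim := SimForm.of_reflTransGen hw
    generalize hs : (w.map Sum.inr : List (Symb (LockNT N T) T)) = s at hsim
    cases hsim with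
    | terminal a t hreach =>
      obtain ⟨a, w, rfl, ha, ht⟩ := List.map_eq_cons_iff.1 hs
      cases ha
      obtain rfl : t = w.map Sum.inr :=
        List.map_injective_iff.2 enc_injective (by simpa [Function.comp_def] using ht.symm)
      exact hreach
    | _ => cases w <;> simp at hs
  · intro hw
    have hw : G.Reaches (w.map Sum.inr) := hw
    have hne : w ≠ [] := fun h => hw.ne_nil (by simp [h])
    obtain ⟨a, w', rfl⟩ := List.exists_cons_of_ne_nil hne
    have hfinish := (SimRule.finish a (hw.mem_symbols List.mem_cons_self)).step []
      ((w'.map Sum.inr).map enc) (by simp) (by simp)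
    refine (reflTransGen_encode hw).tail ?_
    simpa [encode, Function.comp_def] using hfinish

end RCG

/-- SC(1,1) = RC. -/
theorem sc11_eq_rc (T : Type) : SC11 T = RC T := by
  ext L
  constructor
  · rintro ⟨N, G, rfl⟩
    exact ⟨Symb N T, G.toRCG, G.toRCG_lang⟩
  · rintro ⟨N, G, rfl⟩
    exact ⟨RCG.LockNT N T, G.toSCG, G.toSCG_lang⟩
end

section
/- Every language generated by a nonerasing semi-conditional grammar of degree (1,1) is context-sensitive. -/
/-- A context-sensitive (length-nondecreasing) grammar: finitely many productions
`l → r` with `|l| ≤ |r|` and `l` containing at least one nonterminal. -/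
structure CSG (N T : Type) where
  rules : Set (List (Symb N T) × List (Symb N T))
  fin : rules.Finite
  lhs_nt : ∀ r ∈ rules, ∃ A : N, Sum.inl A ∈ r.1
  len : ∀ r ∈ rules, r.1.length ≤ r.2.length
  start : N

def CSG.Step {N T : Type} (G : CSG N T) (s₁ s₂ : List (Symb N T)) : Prop :=
  ∃ l r u v, (l, r) ∈ G.rules ∧ s₁ = u ++ l ++ v ∧ s₂ = u ++ r ++ v

def CSG.Lang {N T : Type} (G : CSG N T) : Set (List T) :=
  {w | Relation.ReflTransGen G.Step [Sum.inl G.start] (w.map Sum.inr)}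

/-- The family of context-sensitive languages over `T`. -/
def CS (T : Type) : Set (Set (List T)) :=
  {L | ∃ (N : Type) (G : CSG N T), G.Lang = L}

/-!
A context-sensitive grammar simulates `G` with a single head. The tape holds the current
sentential form, every symbol decorated with flags marking the two ends of the tape, and the
symbol under the head also carries a control state. To apply `(A → x, Per, For)` the head sweeps
from the left end to the right end, checking that no symbol of `For` occurs and remembering in
one bit whether the (at most one) symbol of `Per` has occurred; it then walks back to an
occurrence of `A`, rewrites it to `x`, and returns to the left end. A final sweep turns a tape of
terminals into the terminal word. Each rule rewrites the head together with at most one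
neighbour and never shrinks the tape, as `x ≠ []`; the decorations range over finitely many
symbols, so there are finitely many rules. Conversely, every step of the simulating grammar is a
move of this one-head machine, which rewrites `A` only after a successful check.
-/

@[simp] theorem List.isEmpty_append {α : Type*} (l₁ l₂ : List α) :
    (l₁ ++ l₂).isEmpty = (l₁.isEmpty && l₂.isEmpty) := by
  cases l₁ <;> simp

theorem List.eq_of_append_cons_eq_of_forall_mem {α : Type*} {P : α → Prop} {p s p' s' : List α}
    {h h' : α} (hp : ∀ x ∈ p, P x) (hs : ∀ x ∈ s, P x) (hh' : ¬ P h')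
    (E : p ++ h :: s = p' ++ h' :: s') : p = p' ∧ h = h' ∧ s = s' := by
  induction p generalizing p' with
  | nil =>
    cases p' with
    | nil => simpa using E
    | cons y p' =>
      obtain ⟨-, rfl⟩ := List.cons_eq_cons.mp E
      exact absurd (hs h' (by simp)) hh'
  | cons x p ih =>
    cases p' with
    | nil =>
      obtain ⟨rfl, -⟩ := List.cons_eq_cons.mp E
      exact absurd (hp x (by simp)) hh'
    | cons y p' =>
      obtain ⟨rfl, E'⟩ := List.cons_eq_cons.mp E
      obtain ⟨rfl, rfl, rfl⟩ := ih (fun z hz => hp z (by simp [hz])) E'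
      exact ⟨rfl, rfl, rfl⟩

theorem List.finite_of_length_le_of_forall_mem {α : Type*} {S : Set α} (hS : S.Finite) (n : ℕ) :
    {l : List α | l.length ≤ n ∧ ∀ x ∈ l, x ∈ S}.Finite := by
  have := hS.to_subtype
  refine ((List.finite_length_le S n).image (List.map Subtype.val)).subset ?_
  rintro l ⟨hl, hlS⟩
  lift l to List S using hlS
  exact ⟨l, by simpa using hl, rfl⟩

namespace SCG

variable {N T : Type}

@[simp] theorem mem_alph {α : Type} {a : α} {w : List α} : a ∈ alph w ↔ a ∈ w := Iff.rfl

@[simp] theorem alph_singleton {α : Type} (a : α) : alph [a] = {a} := by ext; simp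

abbrev Rule (N T : Type) := N × List (Symb N T) × Set (Symb N T) × Set (Symb N T)

def symbols (G : SCG N T) : Set (Symb N T) :=
  insert (Sum.inl G.start) (⋃ rt ∈ G.rules, {a | a ∈ rt.2.1})

theorem symbols_finite (G : SCG N T) : G.symbols.Finite :=
  (G.fin.biUnion fun rt _ => rt.2.1.finite_toSet).insert _

theorem start_mem_symbols (G : SCG N T) : Sum.inl G.start ∈ G.symbols :=
  Set.mem_insert _ _

theorem mem_symbols_of_mem_rhs {G : SCG N T} {rt : Rule N T} (hrt : rt ∈ G.rules)
    {a : Symb N T} (ha : a ∈ rt.2.1) : a ∈ G.symbols :=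
  Or.inr (Set.mem_biUnion hrt ha)

def IsSentential (G : SCG N T) (s : List (Symb N T)) : Prop :=
  Relation.ReflTransGen (G.Step true) [Sum.inl G.start] s

theorem IsSentential.ne_nil {G : SCG N T} {s : List (Symb N T)} (hs : G.IsSentential s) :
    s ≠ [] := by
  induction hs with
  | refl => simp
  | tail _ hstep _ =>
    obtain ⟨A, x, Per, For, u, v, hrt, -, rfl, -⟩ := hstep
    simp [G.ne _ hrt]

def ContextHolds (rt : Rule N T) (s : List (Symb N T)) : Prop :=
  rt.2.2.1 ⊆ alph s ∧ ∀ a ∈ rt.2.2.2, a ∉ alph s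

theorem IsSentential.rewrite {G : SCG N T} {rt : Rule N T} {u v : List (Symb N T)}
    (hs : G.IsSentential (u ++ Sum.inl rt.1 :: v)) (hrt : rt ∈ G.rules)
    (hctx : ContextHolds rt (u ++ Sum.inl rt.1 :: v)) : G.IsSentential (u ++ rt.2.1 ++ v) :=
  hs.tail ⟨_, _, _, _, u, v, hrt, rfl, rfl, hctx⟩

/-- `check rt found` sweeps right verifying the context of `rt`, `found` recording whether the
permitting symbol has been passed; `seek rt` walks left to an occurrence of the left-hand side. -/
inductive Ctrl (N T : Type)
  | idle
  | check (rt : Rule N T) (found : Bool)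
  | seek (rt : Rule N T)

open Ctrl

def Ctrl.WalksLeft (G : SCG N T) : Ctrl N T → Prop
  | idle => True
  | check _ _ => False
  | seek rt => rt ∈ G.rules

/-- `run q u c v`: the head is in state `q` on `c`, with `u` to its left and `v` to its right;
`out w c v`: the final sweep has already turned the prefix into the terminal word `w`. -/
inductive Conf (N T : Type)
  | start
  | run (q : Ctrl N T) (u : List (Symb N T)) (c : Symb N T) (v : List (Symb N T))
  | out (w : List T) (c : Symb N T) (v : List (Symb N T))
  | done (w : List T)

open Conf

inductive Move (G : SCG N T) : Conf N T → Conf N T → Prop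
  | init : Move G .start (run idle [] (Sum.inl G.start) [])
  | left {q u c c' v} (hq : q.WalksLeft G) : Move G (run q (u ++ [c']) c v) (run q u c' (c :: v))
  | checkStart {rt b c v} (hrt : rt ∈ G.rules) (hper : b = true → rt.2.2.1 ⊆ {c})
      (hfor : c ∉ rt.2.2.2) : Move G (run idle [] c v) (run (check rt b) [] c v)
  | checkRight {rt b b' u c d v} (hrt : rt ∈ G.rules)
      (hper : b' = true → b = true ∨ rt.2.2.1 ⊆ {d}) (hfor : d ∉ rt.2.2.2) :
      Move G (run (check rt b) u c (d :: v)) (run (check rt b') (u ++ [c]) d v)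
  | checkEnd {rt u c} (hrt : rt ∈ G.rules) :
      Move G (run (check rt true) u c []) (run (seek rt) u c [])
  | apply {A x₀ xt Per For u v} (hrt : (A, x₀ :: xt, Per, For) ∈ G.rules) :
      Move G (run (seek (A, x₀ :: xt, Per, For)) u (Sum.inl A) v) (run idle u x₀ (xt ++ v))
  | outStart {c v} : Move G (run idle [] c v) (out [] c v)
  | outRight {w t d v} : Move G (out w (Sum.inr t) (d :: v)) (out (w ++ [t]) d v)
  | outEnd {w t} : Move G (out w (Sum.inr t) []) (done (w ++ [t]))

section Completeness

variable {G : SCG N T}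

open Relation

theorem Move.walk_left {q : Ctrl N T} (hq : q.WalksLeft G) {u : List (Symb N T)} :
    ∀ {c v u' c' v'}, u ++ c :: v = u' ++ c' :: v' → u'.length ≤ u.length →
      ReflTransGen (Move G) (run q u c v) (run q u' c' v') := by
  induction u using List.reverseRecOn with
  | nil =>
    intro c v u' c' v' h hle
    obtain rfl : u' = [] := List.eq_nil_of_length_eq_zero (by simpa using hle)
    obtain ⟨rfl, rfl⟩ := List.cons_eq_cons.mp h
    exact .refl
  | append_singleton u e ih =>
    intro c v u' c' v' h hle
    rcases hle.eq_or_lt with hlen | hlt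
    · obtain ⟨rfl, hcv⟩ := List.append_inj h hlen.symm
      obtain ⟨rfl, rfl⟩ := List.cons_eq_cons.mp hcv
      exact .refl
    · refine .head (.left hq) (ih ?_ (by simpa [Nat.lt_succ_iff] using hlt))
      simpa using h

theorem Move.check_sweep {rt : Rule N T} (hrt : rt ∈ G.rules) (hper : rt.2.2.1.Subsingleton)
    {v : List (Symb N T)} :
    ∀ {u c b}, (b = true ↔ rt.2.2.1 ⊆ alph (u ++ [c])) → ContextHolds rt (u ++ c :: v) →
      ∃ u' c', u' ++ [c'] = u ++ c :: v ∧
        ReflTransGen (Move G) (run (check rt b) u c v) (run (check rt true) u' c' []) := by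
  induction v with
  | nil =>
    intro u c b hb hctx
    obtain rfl : b = true := hb.mpr hctx.1
    exact ⟨u, c, rfl, .refl⟩
  | cons d v ih =>
    intro u c b hb hctx
    have hctx' : ContextHolds rt (u ++ [c] ++ d :: v) := by simpa using hctx
    have hd : d ∉ rt.2.2.2 := fun h => hctx.2 d h (by simp)
    -- This is where `|Per| ≤ 1` is used: one bit suffices to remember whether `Per` was seen.
    have hsplit : rt.2.2.1 ⊆ alph (u ++ [c] ++ [d]) → b = true ∨ rt.2.2.1 ⊆ {d} := by
      intro h
      rcases hper.eq_empty_or_singleton with hP | ⟨a, hP⟩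
      · exact .inl (hb.mpr (by simp [hP]))
      · rw [hP, Set.singleton_subset_iff] at h ⊢
        simp only [mem_alph, List.mem_append, List.mem_singleton] at h
        rcases h with h | rfl
        · exact .inl (hb.mpr (by simpa [hP] using h))
        · exact .inr rfl
    classical
    obtain ⟨u', c', heq, hreach⟩ :=
      ih (u := u ++ [c]) (b := decide (rt.2.2.1 ⊆ alph (u ++ [c] ++ [d]))) (by simp) hctx'
    refine ⟨u', c', by simpa using heq, .head (.checkRight hrt ?_ hd) hreach⟩
    simpa using hsplit

theorem Move.reflTransGen_of_step {c c' : Symb N T} {v v' : List (Symb N T)}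
    (hstep : G.Step true (c :: v) (c' :: v')) :
    ReflTransGen (Move G) (run idle [] c v) (run idle [] c' v') := by
  obtain ⟨A, x, Per, For, u, w, hrt, hs, hs', hPer, hFor⟩ := hstep
  obtain ⟨x₀, xt, rfl⟩ := List.exists_cons_of_ne_nil (G.ne _ hrt)
  set rt : Rule N T := (A, x₀ :: xt, Per, For)
  have hctx : ContextHolds rt (c :: v) := ⟨hPer, hFor⟩
  classical
  have hstart : Move G (run idle [] c v) (run (check rt (decide (rt.2.2.1 ⊆ {c}))) [] c v) :=
    .checkStart hrt (by simp) fun h => hFor c h (by simp)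
  obtain ⟨u', c'', hend, hsweep⟩ :=
    Move.check_sweep (G := G) (v := v) hrt (G.per1 _ hrt) (u := []) (c := c)
      (b := decide (rt.2.2.1 ⊆ {c})) (by simp) (by simpa using hctx)
  have hend' : u' ++ [c''] = u ++ Sum.inl A :: w := by rw [hend, hs, List.nil_append]
  have hseek : ReflTransGen (Move G) (run (seek rt) u' c'' []) (run (seek rt) u (Sum.inl A) w) :=
    Move.walk_left (q := seek rt) hrt (by simpa using hend')
      (by have := congrArg List.length hend'; simp at this; omega)
  have hidle : ReflTransGen (Move G) (run idle u x₀ (xt ++ w)) (run idle [] c' v') :=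
    Move.walk_left (q := idle) trivial (by simpa using hs'.symm) (by simp)
  exact .head hstart (hsweep.trans (.head (.checkEnd hrt) (hseek.trans (.head (.apply hrt) hidle))))

theorem Move.out_sweep (w : List T) (t : T) {w' : List T} :
    ReflTransGen (Move G) (out w (Sum.inr t) (w'.map Sum.inr)) (done (w ++ t :: w')) := by
  induction w' generalizing w t with
  | nil => exact .single .outEnd
  | cons t' w' ih =>
    have h := ih (w ++ [t]) t'
    rw [List.append_assoc, List.singleton_append] at h
    exact .head .outRight h

theorem IsSentential.exists_reach {s : List (Symb N T)} (hs : G.IsSentential s) :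
    ∃ c v, s = c :: v ∧ ReflTransGen (Move G) .start (run idle [] c v) := by
  induction hs with
  | refl => exact ⟨_, [], rfl, .single .init⟩
  | @tail s s' hs hstep ih =>
    obtain ⟨c, v, rfl, hreach⟩ := ih
    obtain ⟨c', v', rfl⟩ := List.exists_cons_of_ne_nil (IsSentential.ne_nil (hs.tail hstep))
    exact ⟨c', v', rfl, hreach.trans (Move.reflTransGen_of_step hstep)⟩

theorem Move.reach_done_of_mem_lang {w : List T} (hw : w ∈ G.Lang true) :
    ReflTransGen (Move G) .start (done w) := by
  obtain ⟨c, v, hcv, hreach⟩ := IsSentential.exists_reach hw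
  obtain ⟨t, w', rfl⟩ := List.exists_cons_of_ne_nil (by simpa using IsSentential.ne_nil hw)
  obtain ⟨rfl, rfl⟩ : Sum.inr t = c ∧ w'.map Sum.inr = v := by simpa using hcv
  exact (hreach.tail .outStart).trans (Move.out_sweep [] t)

end Completeness

section Soundness

variable {G : SCG N T}

def Conf.Valid (G : SCG N T) : Conf N T → Prop
  | .start => True
  | run idle u c v => G.IsSentential (u ++ c :: v)
  | run (check rt b) u c v => G.IsSentential (u ++ c :: v) ∧
      (b = true → rt.2.2.1 ⊆ alph (u ++ [c])) ∧ ∀ a ∈ rt.2.2.2, a ∉ alph (u ++ [c])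
  | run (seek rt) u c v => G.IsSentential (u ++ c :: v) ∧ ContextHolds rt (u ++ c :: v)
  | out w c v => G.IsSentential (w.map Sum.inr ++ c :: v)
  | done w => G.IsSentential (w.map Sum.inr)

theorem Conf.Valid.move {a a' : Conf N T} (ha : a.Valid G) (h : Move G a a') : a'.Valid G := by
  cases h with
  | init => exact .refl
  | @left q _ _ _ _ hq =>
    cases q with
    | idle => simpa [Valid] using ha
    | check => exact hq.elim
    | seek => simpa [Valid] using ha
  | checkStart _ hper hfor =>
    refine ⟨ha, fun hb => by simpa using hper hb, ?_⟩
    intro a ha' hac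
    simp only [List.nil_append, alph_singleton, Set.mem_singleton_iff] at hac
    exact hfor (hac ▸ ha')
  | @checkRight rt b b' u c d v _ hper hfor =>
    obtain ⟨hs, hP, hF⟩ := ha
    refine ⟨by simpa using hs, fun hb => ?_, fun a haF => ?_⟩
    · rcases hper hb with hb | hd
      · exact (hP hb).trans fun x hx => List.subset_append_left _ _ hx
      · exact hd.trans (by simp)
    · have := hF a haF
      simp only [mem_alph, List.mem_append, List.mem_singleton] at this ⊢
      rintro ((h | h) | rfl)
      · exact this (.inl h)
      · exact this (.inr h)
      · exact hfor haF
  | checkEnd _ =>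
    obtain ⟨hs, hP, hF⟩ := ha
    exact ⟨hs, hP rfl, hF⟩
  | apply hrt =>
    obtain ⟨hs, hctx⟩ := ha
    simpa [Valid] using hs.rewrite hrt hctx
  | outStart => simpa [Valid] using ha
  | outRight => simpa [Valid] using ha
  | outEnd => simpa [Valid] using ha

theorem Conf.valid_of_reach {a : Conf N T} (h : Relation.ReflTransGen (Move G) .start a) :
    a.Valid G := by
  induction h with
  | refl => trivial
  | tail _ hmove ih => exact ih.move hmove

end Soundness

/-- `cell c l r q` is the symbol `c`, flagged by whether it is the leftmost (`l`) or rightmost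
(`r`) symbol of the tape, and carrying the control state `q` when the head is on it; `out c r` is
the head of the final sweep. -/
inductive TapeSym (N T : Type)
  | start
  | cell (c : Symb N T) (atLeft atRight : Bool) (ctrl : Option (Ctrl N T))
  | out (c : Symb N T) (atRight : Bool)

abbrev Tape (N T : Type) := List (Symb (TapeSym N T) T)

abbrev plainCell (c : Symb N T) (l r : Bool) : Symb (TapeSym N T) T :=
  Sum.inl (.cell c l r none)

abbrev headCell (q : Ctrl N T) (c : Symb N T) (l r : Bool) : Symb (TapeSym N T) T :=
  Sum.inl (.cell c l r (some q))

abbrev outCell (c : Symb N T) (r : Bool) : Symb (TapeSym N T) T :=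
  Sum.inl (.out c r)

def cells : List (Symb N T) → Bool → Bool → Tape N T
  | [], _, _ => []
  | c :: t, l, r => plainCell c l (t.isEmpty && r) :: cells t false r

@[simp] theorem cells_nil (l r : Bool) : cells ([] : List (Symb N T)) l r = [] := rfl

@[simp] theorem cells_cons (c : Symb N T) (t : List (Symb N T)) (l r : Bool) :
    cells (c :: t) l r = plainCell c l (t.isEmpty && r) :: cells t false r := rfl

theorem cells_append (u v : List (Symb N T)) (l r : Bool) :
    cells (u ++ v) l r = cells u l (v.isEmpty && r) ++ cells v (u.isEmpty && l) r := by
  induction u generalizing l with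
  | nil => simp
  | cons c t ih =>
    rw [List.cons_append, cells_cons, cells_cons, ih]
    cases t <;> cases v <;> simp

theorem cells_concat (u : List (Symb N T)) (c : Symb N T) (l r : Bool) :
    cells (u ++ [c]) l r = cells u l false ++ [plainCell c (u.isEmpty && l) r] := by
  simp [cells_append]

theorem cells_eq_cons {v : List (Symb N T)} {l r : Bool} {y : Symb (TapeSym N T) T}
    {ys : Tape N T} (h : cells v l r = y :: ys) :
    ∃ d v₀, v = d :: v₀ ∧ y = plainCell d l (v₀.isEmpty && r) ∧ ys = cells v₀ false r := by
  cases v with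
  | nil => simp at h
  | cons d v₀ =>
    obtain ⟨rfl, rfl⟩ := List.cons_eq_cons.mp h
    exact ⟨d, v₀, rfl, rfl, rfl⟩

theorem cells_eq_concat {u : List (Symb N T)} {l r : Bool} {y : Symb (TapeSym N T) T}
    {ys : Tape N T} (h : cells u l r = ys ++ [y]) :
    ∃ u₀ c, u = u₀ ++ [c] ∧ ys = cells u₀ l false ∧ y = plainCell c (u₀.isEmpty && l) r := by
  rcases List.eq_nil_or_concat u with rfl | ⟨u₀, c, rfl⟩
  · simp at h
  · rw [List.concat_eq_append] at h ⊢
    rw [cells_concat] at h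
    obtain ⟨rfl, hy⟩ := List.append_inj' h rfl
    exact ⟨u₀, c, rfl, rfl, (List.singleton_inj.mp hy).symm⟩

def Conf.encode : Conf N T → Tape N T
  | .start => [Sum.inl .start]
  | run q u c v => cells u true false ++ headCell q c u.isEmpty v.isEmpty :: cells v false true
  | out w c v => w.map Sum.inr ++ outCell c v.isEmpty :: cells v false true
  | done w => w.map Sum.inr

/-- The rule `α ++ h :: β → rh` around the head symbol `h`. The hypotheses `_ ∈ G.symbols` only
serve to make the set of rules finite. -/
inductive WindowRule (G : SCG N T) :
    Tape N T → Symb (TapeSym N T) T → Tape N T → Tape N T → Prop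
  | left {q c c' l r l' r'} (hq : q.WalksLeft G) (hc' : c' ∈ G.symbols) (hc : c ∈ G.symbols) :
      WindowRule G [plainCell c' l r] (headCell q c l' r') []
        [headCell q c' l r, plainCell c l' r']
  | checkStart {rt b c r} (hrt : rt ∈ G.rules) (hper : b = true → rt.2.2.1 ⊆ {c})
      (hfor : c ∉ rt.2.2.2) (hc : c ∈ G.symbols) :
      WindowRule G [] (headCell idle c true r) [] [headCell (check rt b) c true r]
  | checkRight {rt b b' c d l r l' r'} (hrt : rt ∈ G.rules)
      (hper : b' = true → b = true ∨ rt.2.2.1 ⊆ {d}) (hfor : d ∉ rt.2.2.2)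
      (hc : c ∈ G.symbols) (hd : d ∈ G.symbols) :
      WindowRule G [] (headCell (check rt b) c l r) [plainCell d l' r']
        [plainCell c l r, headCell (check rt b') d l' r']
  | checkEnd {rt c l} (hrt : rt ∈ G.rules) (hc : c ∈ G.symbols) :
      WindowRule G [] (headCell (check rt true) c l true) [] [headCell (seek rt) c l true]
  | apply {A x₀ xt Per For l r} (hrt : (A, x₀ :: xt, Per, For) ∈ G.rules)
      (hA : Sum.inl A ∈ G.symbols) :
      WindowRule G [] (headCell (seek (A, x₀ :: xt, Per, For)) (Sum.inl A) l r) []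
        (headCell idle x₀ l (xt.isEmpty && r) :: cells xt false r)
  | outStart {c r} (hc : c ∈ G.symbols) :
      WindowRule G [] (headCell idle c true r) [] [outCell c r]
  | outRight {t d r} (ht : Sum.inr t ∈ G.symbols) (hd : d ∈ G.symbols) :
      WindowRule G [] (outCell (Sum.inr t) false) [plainCell d false r] [Sum.inr t, outCell d r]
  | outEnd {t} (ht : Sum.inr t ∈ G.symbols) :
      WindowRule G [] (outCell (Sum.inr t) true) [] [Sum.inr t]

def Ctrl.Legal (G : SCG N T) : Ctrl N T → Prop
  | idle => True
  | check rt _ => rt ∈ G.rules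
  | seek rt => rt ∈ G.rules

theorem Ctrl.finite_setOf_legal (G : SCG N T) : {q : Ctrl N T | q.Legal G}.Finite := by
  have := G.fin.to_subtype
  let f : Option (G.rules × Option Bool) → Ctrl N T
    | none => idle
    | some (rt, some b) => check rt b
    | some (rt, none) => seek rt
  refine (Set.finite_range f).subset ?_
  rintro (_ | ⟨rt, b⟩ | rt) h
  · exact ⟨none, rfl⟩
  · exact ⟨some (⟨rt, h⟩, some b), rfl⟩
  · exact ⟨some (⟨rt, h⟩, none), rfl⟩

def tapeAlphabet (G : SCG N T) : Set (Symb (TapeSym N T) T) :=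
  {x | match x with
    | Sum.inl .start => True
    | Sum.inl (.cell c _ _ q) => c ∈ G.symbols ∧ ∀ q' ∈ q, q'.Legal G
    | Sum.inl (.out c _) => c ∈ G.symbols
    | Sum.inr t => Sum.inr t ∈ G.symbols}

theorem tapeAlphabet_finite (G : SCG N T) : (tapeAlphabet G).Finite := by
  have hS := G.symbols_finite
  have hQ : {q : Option (Ctrl N T) | ∀ q' ∈ q, q'.Legal G}.Finite :=
    (((Ctrl.finite_setOf_legal G).image some).insert none).subset <| by
      rintro (_ | q) h
      · exact Set.mem_insert _ _
      · exact Set.mem_insert_of_mem _ ⟨q, h q rfl, rfl⟩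
  refine ((((Set.finite_singleton (Sum.inl .start)).union
    ((hS.preimage Sum.inr_injective.injOn).image Sum.inr)).union
    ((hS.prod (Set.finite_univ.prod (Set.finite_univ.prod hQ))).image
      fun x => Sum.inl (.cell x.1 x.2.1 x.2.2.1 x.2.2.2))).union
    ((hS.prod Set.finite_univ).image fun x => Sum.inl (.out x.1 x.2))).subset ?_
  rintro ((_ | ⟨c, l, r, q⟩ | ⟨c, r⟩) | t) hx
  · exact .inl (.inl (.inl rfl))
  · exact .inl (.inr ⟨(c, l, r, q), ⟨hx.1, trivial, trivial, hx.2⟩, rfl⟩)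
  · exact .inr ⟨(c, r), ⟨hx, trivial⟩, rfl⟩
  · exact .inl (.inl (.inr ⟨t, hx, rfl⟩))

@[simp] theorem length_cells (u : List (Symb N T)) (l r : Bool) :
    (cells u l r).length = u.length := by
  induction u generalizing l <;> simp [*]

@[simp] theorem plainCell_mem_tapeAlphabet {G : SCG N T} {c : Symb N T} {l r : Bool} :
    plainCell c l r ∈ tapeAlphabet G ↔ c ∈ G.symbols := by
  simp [tapeAlphabet]

@[simp] theorem headCell_mem_tapeAlphabet {G : SCG N T} {q : Ctrl N T} {c : Symb N T}
    {l r : Bool} : headCell q c l r ∈ tapeAlphabet G ↔ c ∈ G.symbols ∧ q.Legal G := by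
  simp [tapeAlphabet]

@[simp] theorem outCell_mem_tapeAlphabet {G : SCG N T} {c : Symb N T} {r : Bool} :
    outCell c r ∈ tapeAlphabet G ↔ c ∈ G.symbols := Iff.rfl

@[simp] theorem inr_mem_tapeAlphabet {G : SCG N T} {t : T} :
    Sum.inr t ∈ tapeAlphabet G ↔ Sum.inr t ∈ G.symbols := Iff.rfl

theorem cells_subset_tapeAlphabet {G : SCG N T} {u : List (Symb N T)}
    (hu : ∀ c ∈ u, c ∈ G.symbols) (l r : Bool) : ∀ x ∈ cells u l r, x ∈ tapeAlphabet G := by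
  induction u generalizing l with
  | nil => simp
  | cons c t ih =>
    simp only [List.mem_cons, forall_eq_or_imp] at hu
    simp only [cells_cons, List.mem_cons, forall_eq_or_imp, plainCell_mem_tapeAlphabet]
    exact ⟨hu.1, ih hu.2 false⟩

theorem Ctrl.WalksLeft.legal {G : SCG N T} {q : Ctrl N T} (hq : q.WalksLeft G) : q.Legal G := by
  cases q with
  | idle => trivial
  | check => exact hq.elim
  | seek => exact hq

section WindowRule

variable {G : SCG N T} {α β rh : Tape N T} {h : Symb (TapeSym N T) T}

theorem WindowRule.mem_tapeAlphabet (hr : WindowRule G α h β rh) :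
    ∀ x ∈ α ++ h :: β ++ rh, x ∈ tapeAlphabet G := by
  cases hr with
  | left hq => simp [*, hq.legal]
  | apply hrt hA =>
    have hx : ∀ c ∈ _, c ∈ G.symbols := fun c hc => mem_symbols_of_mem_rhs hrt hc
    simp only [List.nil_append, List.cons_append, List.mem_cons, forall_eq_or_imp,
      headCell_mem_tapeAlphabet]
    exact ⟨⟨hA, hrt⟩, ⟨hx _ (by simp), trivial⟩,
      cells_subset_tapeAlphabet (fun c hc => hx c (by simp [hc])) _ _⟩
  | _ => simp [Ctrl.Legal, *]

theorem WindowRule.length_le (hr : WindowRule G α h β rh) :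
    (α ++ h :: β).length ≤ rh.length := by
  cases hr <;> simp

theorem WindowRule.length_rhs_le {K : ℕ} (hK : ∀ rt ∈ G.rules, rt.2.1.length ≤ K)
    (hr : WindowRule G α h β rh) : rh.length ≤ K + 2 := by
  cases hr with
  | apply hrt =>
    have := hK _ hrt
    simp at this ⊢
    omega
  | _ => simp

end WindowRule

def tapeRules (G : SCG N T) : Set (Tape N T × Tape N T) :=
  insert ([Sum.inl .start], [headCell idle (Sum.inl G.start) true true])
    {p | ∃ α h β, WindowRule G α h β p.2 ∧ p.1 = α ++ h :: β}

theorem tapeRules_finite (G : SCG N T) : (tapeRules G).Finite := by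
  obtain ⟨K, hK⟩ := (G.fin.image fun rt => rt.2.1.length).bddAbove
  have hK' : ∀ rt ∈ G.rules, rt.2.1.length ≤ K := fun rt hrt => hK ⟨rt, hrt, rfl⟩
  have hW := List.finite_of_length_le_of_forall_mem (tapeAlphabet_finite G) (K + 2)
  refine ((hW.prod hW).insert
    ([Sum.inl .start], [headCell idle (Sum.inl G.start) true true])).subset ?_
  rintro ⟨lh, rh⟩ (h | ⟨α, h, β, hr, rfl⟩)
  · exact .inl h
  · have hmem := hr.mem_tapeAlphabet
    exact .inr ⟨⟨hr.length_le.trans (hr.length_rhs_le hK'),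
      fun x hx => hmem x (List.mem_append_left _ hx)⟩,
      hr.length_rhs_le hK', fun x hx => hmem x (List.mem_append_right _ hx)⟩

/-- A reachable tape has at most one non-passive symbol, the head or the start symbol, and every
rule rewrites around it. -/
def Passive : Symb (TapeSym N T) T → Prop
  | Sum.inl (.cell _ _ _ none) => True
  | Sum.inr _ => True
  | _ => False

theorem WindowRule.not_passive_head {G : SCG N T} {α β rh : Tape N T}
    {h : Symb (TapeSym N T) T} (hr : WindowRule G α h β rh) : ¬ Passive h := by
  cases hr <;> exact id

def toCSG (G : SCG N T) : CSG (TapeSym N T) T where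
  rules := tapeRules G
  fin := tapeRules_finite G
  lhs_nt := by
    rintro ⟨lh, rh⟩ (h | ⟨α, h | t, β, hr, rfl⟩)
    · obtain ⟨rfl, -⟩ := Prod.mk.inj h
      exact ⟨.start, by simp⟩
    · exact ⟨h, by simp⟩
    · exact absurd trivial hr.not_passive_head
  len := by
    rintro ⟨lh, rh⟩ (h | ⟨α, h, β, hr, rfl⟩)
    · obtain ⟨rfl, rfl⟩ := Prod.mk.inj h
      rfl
    · exact hr.length_le
  start := .start

section Simulation

variable {G : SCG N T}

theorem toCSG_step_of_window {α β rh u v z z' : Tape N T} {h : Symb (TapeSym N T) T}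
    (hr : WindowRule G α h β rh) (hz : z = u ++ (α ++ h :: β) ++ v) (hz' : z' = u ++ rh ++ v) :
    G.toCSG.Step z z' :=
  ⟨_, _, u, v, .inr ⟨α, h, β, hr, rfl⟩, hz, hz'⟩

def Conf.symbols : Conf N T → List (Symb N T)
  | .start => []
  | run _ u c v => u ++ c :: v
  | out w c v => w.map Sum.inr ++ c :: v
  | done w => w.map Sum.inr

theorem Move.symbols_subset {a a' : Conf N T} (h : Move G a a')
    (ha : ∀ x ∈ a.symbols, x ∈ G.symbols) : ∀ x ∈ a'.symbols, x ∈ G.symbols := by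
  cases h with
  | init => simpa [Conf.symbols] using G.start_mem_symbols
  | @apply A x₀ xt Per For u v hrt =>
    have hx : ∀ c ∈ x₀ :: xt, c ∈ G.symbols := fun c hc => mem_symbols_of_mem_rhs hrt hc
    simp only [Conf.symbols, List.mem_append, List.mem_cons] at ha hx ⊢
    rintro x (hx' | rfl | hx' | hx')
    · exact ha x (.inl hx')
    · exact hx x (.inl rfl)
    · exact hx x (.inr hx')
    · exact ha x (.inr (.inr hx'))
  | _ => simpa [Conf.symbols] using ha

theorem Move.toCSG_step {a a' : Conf N T} (h : Move G a a')
    (ha : ∀ x ∈ a.symbols, x ∈ G.symbols) : G.toCSG.Step a.encode a'.encode := by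
  cases h with
  | init => exact ⟨_, _, [], [], .inl rfl, rfl, rfl⟩
  | @left q u c c' v hq =>
    exact toCSG_step_of_window (u := cells u true false) (v := cells v false true)
      (.left (l := u.isEmpty) (r := false) (l' := false) (r' := v.isEmpty) hq
        (ha c' (by simp [Conf.symbols])) (ha c (by simp [Conf.symbols])))
      (by simp [encode, cells_concat]) (by simp [encode])
  | @checkStart rt b c v hrt hper hfor =>
    exact toCSG_step_of_window (u := []) (v := cells v false true)
      (.checkStart (r := v.isEmpty) hrt hper hfor (ha c (by simp [Conf.symbols])))
      (by simp [encode]) (by simp [encode])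
  | @checkRight rt b b' u c d v hrt hper hfor =>
    exact toCSG_step_of_window (u := cells u true false) (v := cells v false true)
      (.checkRight (l := u.isEmpty) (r := false) (l' := false) (r' := v.isEmpty) hrt hper hfor
        (ha c (by simp [Conf.symbols])) (ha d (by simp [Conf.symbols])))
      (by simp [encode]) (by simp [encode, cells_concat])
  | @checkEnd rt u c hrt =>
    exact toCSG_step_of_window (u := cells u true false) (v := [])
      (.checkEnd (l := u.isEmpty) hrt (ha c (by simp [Conf.symbols])))
      (by simp [encode]) (by simp [encode])
  | @apply A x₀ xt Per For u v hrt =>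
    exact toCSG_step_of_window (u := cells u true false) (v := cells v false true)
      (.apply (l := u.isEmpty) (r := v.isEmpty) hrt (ha (Sum.inl A) (by simp [Conf.symbols])))
      (by simp [encode]) (by simp [encode, cells_append])
  | @outStart c v =>
    exact toCSG_step_of_window (u := []) (v := cells v false true)
      (.outStart (r := v.isEmpty) (ha c (by simp [Conf.symbols])))
      (by simp [encode]) (by simp [encode])
  | @outRight w t d v =>
    exact toCSG_step_of_window (u := w.map Sum.inr) (v := cells v false true)
      (.outRight (r := v.isEmpty) (ha (Sum.inr t) (by simp [Conf.symbols]))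
        (ha d (by simp [Conf.symbols])))
      (by simp [encode]) (by simp [encode])
  | @outEnd w t =>
    exact toCSG_step_of_window (u := w.map Sum.inr) (v := [])
      (.outEnd (ha (Sum.inr t) (by simp [Conf.symbols]))) (by simp [encode]) (by simp [encode])

theorem Move.toCSG_reflTransGen {a b : Conf N T} (h : Relation.ReflTransGen (Move G) a b)
    (ha : ∀ x ∈ a.symbols, x ∈ G.symbols) :
    Relation.ReflTransGen G.toCSG.Step a.encode b.encode := by
  induction h using Relation.ReflTransGen.head_induction_on with
  | refl => exact .refl
  | head hmove _ ih => exact .head (hmove.toCSG_step ha) (ih (hmove.symbols_subset ha))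

end Simulation

section Inversion

variable {G : SCG N T}

theorem passive_of_mem_cells {u : List (Symb N T)} {l r : Bool} :
    ∀ x ∈ cells u l r, Passive x := by
  induction u generalizing l with
  | nil => simp
  | cons c t ih => simpa [Passive] using ih

theorem passive_of_mem_map_inr {w : List T} :
    ∀ x ∈ (w.map Sum.inr : Tape N T), Passive x := by
  simp [Passive]

theorem toCSG_step_cases {p s z : Tape N T} {h : Symb (TapeSym N T) T}
    (hp : ∀ x ∈ p, Passive x) (hs : ∀ x ∈ s, Passive x) (hz : G.toCSG.Step (p ++ h :: s) z) :
    (h = Sum.inl .start ∧ z = p ++ headCell idle (Sum.inl G.start) true true :: s) ∨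
      ∃ α β rh u v, WindowRule G α h β rh ∧ p = u ++ α ∧ s = β ++ v ∧ z = u ++ rh ++ v := by
  obtain ⟨lh, rh, u, v, hr, E, rfl⟩ := hz
  rcases hr with hr | ⟨α, h', β, hr, rfl⟩
  · obtain ⟨rfl, rfl⟩ := Prod.mk.inj hr
    obtain ⟨rfl, rfl, rfl⟩ :=
      List.eq_of_append_cons_eq_of_forall_mem hp hs (by simp [Passive])
        (E.trans (by simp) : _ = u ++ Sum.inl .start :: v)
    exact .inl ⟨rfl, by simp⟩
  · obtain ⟨rfl, rfl, rfl⟩ :=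
      List.eq_of_append_cons_eq_of_forall_mem hp hs hr.not_passive_head
        (E.trans (by simp) : _ = (u ++ α) ++ h' :: (β ++ v))
    exact .inr ⟨α, β, rh, u, v, hr, rfl, rfl, by simp⟩

theorem Move.exists_of_toCSG_step_run {q : Ctrl N T} {u : List (Symb N T)} {c : Symb N T}
    {v : List (Symb N T)} {z : Tape N T} (hz : G.toCSG.Step (run q u c v).encode z) :
    ∃ a', Move G (run q u c v) a' ∧ z = a'.encode := by
  simp only [encode] at hz
  generalize hh : headCell q c u.isEmpty v.isEmpty = h at hz
  rcases toCSG_step_cases passive_of_mem_cells passive_of_mem_cells hz with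
    ⟨rfl, -⟩ | ⟨α, β, rh, u', v', hr, hp, hs, rfl⟩
  · simp at hh
  cases hr <;> simp only [headCell, outCell, Sum.inl.injEq, TapeSym.cell.injEq,
    Option.some.injEq, reduceCtorEq] at hh
  case left hq _ _ =>
    obtain ⟨rfl, rfl, rfl, rfl⟩ := hh
    obtain ⟨u₀, c', rfl, rfl, hc'⟩ := cells_eq_concat hp
    simp only [Sum.inl.injEq, TapeSym.cell.injEq] at hc'
    obtain ⟨rfl, rfl, rfl, -⟩ := hc'
    exact ⟨_, .left hq, by simp [encode, ← hs]⟩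
  case checkStart hrt hper hfor _ =>
    obtain ⟨rfl, hu, rfl, rfl⟩ := hh
    obtain rfl := List.isEmpty_iff.mp hu
    exact ⟨_, .checkStart hrt hper hfor, by simp_all [encode]⟩
  case checkRight hrt hper hfor _ _ =>
    obtain ⟨rfl, rfl, rfl, rfl⟩ := hh
    obtain ⟨d, v, rfl, hd, rfl⟩ := cells_eq_cons hs
    simp only [Sum.inl.injEq, TapeSym.cell.injEq] at hd
    obtain ⟨rfl, rfl, rfl, -⟩ := hd
    exact ⟨_, .checkRight hrt hper hfor, by simp [encode, cells_concat, hp]⟩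
  case checkEnd hrt _ =>
    obtain ⟨rfl, rfl, hv, rfl⟩ := hh
    obtain rfl := List.isEmpty_iff.mp hv
    exact ⟨_, .checkEnd hrt, by simp_all [encode]⟩
  case apply hrt _ =>
    obtain ⟨rfl, rfl, rfl, rfl⟩ := hh
    rw [List.nil_append] at hs
    subst hs
    exact ⟨_, .apply hrt, by simp [encode, cells_append, hp]⟩
  case outStart =>
    obtain ⟨rfl, hu, rfl, rfl⟩ := hh
    obtain rfl := List.isEmpty_iff.mp hu
    exact ⟨_, .outStart, by simp_all [encode]⟩

theorem Move.exists_of_toCSG_step_out {w : List T} {c : Symb N T} {v : List (Symb N T)}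
    {z : Tape N T} (hz : G.toCSG.Step (out w c v).encode z) :
    ∃ a', Move G (out w c v) a' ∧ z = a'.encode := by
  simp only [encode] at hz
  generalize hh : outCell c v.isEmpty = h at hz
  rcases toCSG_step_cases passive_of_mem_map_inr passive_of_mem_cells hz with
    ⟨rfl, -⟩ | ⟨α, β, rh, u', v', hr, hp, hs, rfl⟩
  · simp at hh
  cases hr with
  | outRight =>
    simp only [outCell, Sum.inl.injEq, TapeSym.out.injEq] at hh
    obtain ⟨rfl, hv⟩ := hh
    obtain ⟨d, v, rfl, hd, rfl⟩ := cells_eq_cons hs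
    simp only [Sum.inl.injEq, TapeSym.cell.injEq] at hd
    obtain ⟨rfl, -, rfl, -⟩ := hd
    exact ⟨_, .outRight, by simp [encode, hp]⟩
  | outEnd =>
    simp only [outCell, Sum.inl.injEq, TapeSym.out.injEq] at hh
    obtain ⟨rfl, hv⟩ := hh
    obtain rfl := List.isEmpty_iff.mp hv
    exact ⟨_, .outEnd, by simp_all [encode]⟩
  | _ => simp at hh

theorem Move.exists_of_toCSG_step {a : Conf N T} {z : Tape N T}
    (hz : G.toCSG.Step a.encode z) : ∃ a', Move G a a' ∧ z = a'.encode := by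
  cases a with
  | start =>
    rcases toCSG_step_cases (p := []) (s := []) (by simp) (by simp) hz with
      ⟨-, rfl⟩ | ⟨α, β, rh, u, v, hr, -⟩
    · exact ⟨_, .init, rfl⟩
    · cases hr
  | run q u c v => exact exists_of_toCSG_step_run hz
  | out w c v => exact exists_of_toCSG_step_out hz
  | done w =>
    obtain ⟨lh, rh, u, v, hr, E, -⟩ := hz
    obtain ⟨X, hX⟩ := G.toCSG.lhs_nt _ hr
    have : Sum.inl X ∈ (w.map Sum.inr : Tape N T) := by
      rw [show (done w : Conf N T).encode = w.map Sum.inr from rfl] at E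
      simp [E, hX]
    simp at this

theorem Move.exists_of_toCSG_reflTransGen {z : Tape N T}
    (hz : Relation.ReflTransGen G.toCSG.Step [Sum.inl .start] z) :
    ∃ a, Relation.ReflTransGen (Move G) .start a ∧ z = a.encode := by
  induction hz with
  | refl => exact ⟨.start, .refl, rfl⟩
  | tail _ hstep ih =>
    obtain ⟨a, ha, rfl⟩ := ih
    obtain ⟨a', hmove, rfl⟩ := Move.exists_of_toCSG_step hstep
    exact ⟨a', ha.tail hmove, rfl⟩

theorem Conf.eq_done_of_encode_eq {a : Conf N T} {w : List T} (h : a.encode = w.map Sum.inr) :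
    a = done w := by
  cases a with
  | done w' => exact congrArg done (List.map_injective_iff.mpr Sum.inr_injective h)
  | start =>
    have : Sum.inl .start ∈ (w.map Sum.inr : Tape N T) := h ▸ List.mem_singleton_self _
    simp at this
  | run q u c v =>
    have : headCell q c u.isEmpty v.isEmpty ∈ (w.map Sum.inr : Tape N T) := by simp [← h, encode]
    simp at this
  | out w' c v =>
    have : outCell c v.isEmpty ∈ (w.map Sum.inr : Tape N T) := by simp [← h, encode]
    simp at this

end Inversion

theorem toCSG_lang (G : SCG N T) : G.toCSG.Lang = G.Lang true := by
  ext w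
  constructor
  · intro hw
    obtain ⟨a, ha, hwa⟩ := Move.exists_of_toCSG_reflTransGen hw
    obtain rfl := Conf.eq_done_of_encode_eq hwa.symm
    exact Conf.valid_of_reach ha
  · intro hw
    exact Move.toCSG_reflTransGen (Move.reach_done_of_mem_lang hw) (by simp [Conf.symbols])

end SCG

/-- every language of a nonerasing semi-conditional grammar of
degree (1,1) is context-sensitive. -/
theorem sc11_subset_cs (T : Type) : SC11 T ⊆ CS T := by
  rintro L ⟨N, G, rfl⟩
  exact ⟨_, G.toCSG, G.toCSG_lang⟩
end

section
/- For each n≥1, the language Tₙ = ⋃_{i=1}^{n} {aᵢʲ : j≥1} over the alphabet {a₁,...,aₙ} is generated by a semi-conditional grammar of degree (1,0) with exactly two nonterminals, namely G=({S,A},{a₁,...,aₙ},P,S) with P={(S→aᵢA,0,0),(S→aᵢ,0,0),(A→aᵢA,aᵢ,0),(A→aᵢ,aᵢ,0) : 1≤i≤n}. -/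
/-- The four production schemes S→aᵢA, S→aᵢ, (A→aᵢA, aᵢ, 0), (A→aᵢ, aᵢ, 0),
with nonterminals `S = 0`, `A = 1` in `Fin 2` and terminals `aᵢ = i` in `Fin n`. -/
def Tn.ruleFun (n : ℕ) (p : Fin n × Fin 4) :
    Fin 2 × List (Symb (Fin 2) (Fin n)) × Set (Symb (Fin 2) (Fin n)) × Set (Symb (Fin 2) (Fin n)) :=
  ![ (0, [Sum.inr p.1, Sum.inl 1], ∅, ∅),
     (0, [Sum.inr p.1], ∅, ∅),
     (1, [Sum.inr p.1, Sum.inl 1], {Sum.inr p.1}, ∅),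
     (1, [Sum.inr p.1], {Sum.inr p.1}, ∅) ] p.2

/-- The semi-conditional grammar `G = ({S,A}, {a₁,…,aₙ}, P, S)` of degree (1,0). -/
def Tn.G (n : ℕ) : SCG (Fin 2) (Fin n) where
  rules := Set.range (Tn.ruleFun n)
  fin := Set.finite_range _
  ne := by
    rintro r ⟨⟨i, k⟩, rfl⟩
    fin_cases k <;> simp [Tn.ruleFun]
  per1 := by
    rintro r ⟨⟨i, k⟩, rfl⟩
    fin_cases k <;>
      simp [Tn.ruleFun, Set.subsingleton_empty, Set.subsingleton_singleton]
  for1 := by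
    rintro r ⟨⟨i, k⟩, rfl⟩
    fin_cases k <;> simp [Tn.ruleFun, Set.subsingleton_empty]
  start := 0

namespace TnAux

variable {n : ℕ}

/-- Invariant for sentential forms of `Tn.G n`. -/
def Good (n : ℕ) (s : List (Symb (Fin 2) (Fin n))) : Prop :=
  s = [Sum.inl 0] ∨ ∃ i : Fin n, ∃ j : ℕ, 1 ≤ j ∧
    (s = List.replicate j (Sum.inr i) ++ [Sum.inl 1] ∨ s = List.replicate j (Sum.inr i))

lemma split_lemma (i : Fin n) (c : Fin 2) :
    ∀ (j : ℕ) (u : List (Symb (Fin 2) (Fin n))) (A : Fin 2) (v : List (Symb (Fin 2) (Fin n))),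
    u ++ Sum.inl A :: v = List.replicate j (Sum.inr i) ++ [Sum.inl c] →
    u = List.replicate j (Sum.inr i) ∧ A = c ∧ v = [] := by
  intro j
  induction j with
  | zero =>
    intro u A v h
    cases u with
    | nil => simpa using h
    | cons x u' =>
      simp only [List.replicate_zero, List.nil_append, List.cons_append,
        List.cons_eq_cons] at h
      exact absurd h.2 (by simp)
  | succ j ih =>
    intro u A v h
    cases u with
    | nil => simp [List.replicate_succ] at h
    | cons x u' =>
      simp only [List.replicate_succ, List.cons_append, List.cons_eq_cons] at h
      obtain ⟨rfl, h2⟩ := h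
      obtain ⟨h3, h4, h5⟩ := ih u' A v h2
      exact ⟨by simp [List.replicate_succ, h3], h4, h5⟩

lemma step_good {s₁ s₂ : List (Symb (Fin 2) (Fin n))} (hg : Good n s₁)
    (hs : (Tn.G n).Step true s₁ s₂) : Good n s₂ := by
  obtain ⟨A, x, Per, For, u, v, hmem, h1, h2, hper, _⟩ := hs
  obtain ⟨⟨p, k⟩, heq⟩ := hmem
  rcases hg with hg | ⟨i, j, hj, hg | hg⟩
  · -- s₁ = [inl 0]
    rw [hg] at h1
    have hu : u = [] ∧ A = 0 ∧ v = [] := by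
      cases u with
      | nil => simpa [List.cons_eq_cons] using h1.symm
      | cons y u' =>
        simp only [List.cons_append, List.cons_eq_cons] at h1
        exact absurd h1.2.symm (by simp)
    obtain ⟨rfl, rfl, rfl⟩ := hu
    fin_cases k <;> simp [Tn.ruleFun, Prod.ext_iff] at heq
    · obtain ⟨rfl, -, -⟩ := heq
      exact Or.inr ⟨p, 1, le_refl 1, Or.inl (by simp [h2])⟩
    · obtain ⟨rfl, -, -⟩ := heq
      exact Or.inr ⟨p, 1, le_refl 1, Or.inr (by simp [h2])⟩
  · -- s₁ = replicate j (inr i) ++ [inl 1]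
    rw [hg] at h1
    obtain ⟨rfl, rfl, rfl⟩ := split_lemma i 1 j u A v h1.symm
    fin_cases k <;> simp [Tn.ruleFun, Prod.ext_iff] at heq
    · -- per condition: inr p ∈ alph s₁
      obtain ⟨rfl, rfl, -⟩ := heq
      have hp : (Sum.inr p : Symb (Fin 2) (Fin n)) ∈ alph s₁ :=
        hper (by simp)
      rw [hg] at hp
      simp only [alph, Set.mem_setOf_eq, List.mem_append, List.mem_replicate,
        List.mem_singleton] at hp
      rcases hp with ⟨-, hp⟩ | hp
      · obtain rfl : p = i := Sum.inr.inj hp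
        refine Or.inr ⟨p, j + 1, by omega, Or.inl ?_⟩
        rw [h2, List.replicate_succ' (n := j)]
        simp
      · exact absurd hp (by simp)
    · obtain ⟨rfl, rfl, -⟩ := heq
      have hp : (Sum.inr p : Symb (Fin 2) (Fin n)) ∈ alph s₁ :=
        hper (by simp)
      rw [hg] at hp
      simp only [alph, Set.mem_setOf_eq, List.mem_append, List.mem_replicate,
        List.mem_singleton] at hp
      rcases hp with ⟨-, hp⟩ | hp
      · obtain rfl : p = i := Sum.inr.inj hp
        refine Or.inr ⟨p, j + 1, by omega, Or.inr ?_⟩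
        rw [h2, List.replicate_succ' (n := j)]
        simp
      · exact absurd hp (by simp)
  · -- terminal, no step possible
    exfalso
    have : (Sum.inl A : Symb (Fin 2) (Fin n)) ∈ List.replicate j (Sum.inr i) := by
      rw [← hg, h1]; simp
    simp [List.mem_replicate] at this

lemma good_of_reach {s : List (Symb (Fin 2) (Fin n))}
    (h : Relation.ReflTransGen ((Tn.G n).Step true) [Sum.inl 0] s) : Good n s := by
  induction h with
  | refl => exact Or.inl rfl
  | tail _ hstep ih => exact step_good ih hstep

lemma deriv_form (i : Fin n) : ∀ j, 1 ≤ j →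
    Relation.ReflTransGen ((Tn.G n).Step true) [Sum.inl 0]
      (List.replicate j (Sum.inr i) ++ [Sum.inl 1]) := by
  intro j
  induction j with
  | zero => omega
  | succ j ih =>
    intro _
    rcases Nat.eq_zero_or_pos j with rfl | hj
    · refine Relation.ReflTransGen.single ?_
      exact ⟨0, [Sum.inr i, Sum.inl 1], ∅, ∅, [], [], ⟨⟨i, 0⟩, rfl⟩, rfl, rfl,
        by simp, by simp⟩
    · refine (ih hj).tail ?_
      refine ⟨1, [Sum.inr i, Sum.inl 1], {Sum.inr i}, ∅,
        List.replicate j (Sum.inr i), [], ⟨⟨i, 2⟩, rfl⟩, rfl, ?_, ?_, by simp⟩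
      · rw [List.replicate_succ' (n := j)]; simp
      · intro a ha
        simp only [Set.mem_singleton_iff] at ha
        subst ha
        simp [alph, List.mem_replicate]
        omega

end TnAux

/-- the grammar `Tn.G n` has degree (1,0) (all forbidding sets are
empty) and generates Tₙ = ⋃ᵢ {aᵢʲ : j ≥ 1}. -/
theorem tn_language (n : ℕ) (hn : 1 ≤ n) :
    (∀ r ∈ (Tn.G n).rules, r.2.2.2 = ∅) ∧
    (Tn.G n).Lang true =
      {w : List (Fin n) | ∃ i : Fin n, ∃ j : ℕ, 1 ≤ j ∧ w = List.replicate j i} := by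
  constructor
  · rintro r ⟨⟨i, k⟩, rfl⟩
    fin_cases k <;> simp [Tn.ruleFun]
  · ext w
    simp only [SCG.Lang, Set.mem_setOf_eq]
    constructor
    · intro h
      have hg := TnAux.good_of_reach (n := n) h
      rcases hg with hg | ⟨i, j, hj, hg | hg⟩
      · exfalso
        have : (Sum.inl 0 : Symb (Fin 2) (Fin n)) ∈ w.map Sum.inr := by rw [hg]; simp
        simp at this
      · exfalso
        have : (Sum.inl 1 : Symb (Fin 2) (Fin n)) ∈ w.map Sum.inr := by rw [hg]; simp
        simp at this
      · refine ⟨i, j, hj, ?_⟩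
        have : w.map Sum.inr = (List.replicate j i).map (Sum.inr : Fin n → Symb (Fin 2) (Fin n)) := by
          rw [hg]; simp
        exact List.map_injective_iff.mpr Sum.inr_injective this
    · rintro ⟨i, j, hj, rfl⟩
      have hrep : (List.replicate j i).map (Sum.inr : Fin n → Symb (Fin 2) (Fin n)) =
          List.replicate j (Sum.inr i) := by simp
      rw [hrep]
      rcases Nat.exists_eq_add_of_le hj with ⟨m, rfl⟩
      rcases Nat.eq_zero_or_pos m with rfl | hm
      · refine Relation.ReflTransGen.single ?_
        exact ⟨0, [Sum.inr i], ∅, ∅, [], [], ⟨⟨i, 1⟩, rfl⟩, rfl, rfl, by simp, by simp⟩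
      · refine (TnAux.deriv_form i m hm).tail ?_
        refine ⟨1, [Sum.inr i], {Sum.inr i}, ∅,
          List.replicate m (Sum.inr i), [], ⟨⟨i, 3⟩, rfl⟩, rfl, ?_, ?_, by simp⟩
        · rw [show 1 + m = m + 1 by omega, List.replicate_succ' (n := m)]; simp
        · intro a ha
          simp only [Set.mem_singleton_iff] at ha
          subst ha
          simp [alph, List.mem_replicate]
          omega
end
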